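/- arXiv:2207.11930 — 11 statements merged into one kernel-verified Lean document; each statement's English description precedes it below -/
import Mathlib

section
/- As a Lie algebra, the Heisenberg–Weyl algebra H is generated by the four elements A, B, B*A^2 and B^2*A; that is, the smallest Lie subalgebra of H (with bracket [x,y] = x*y - y*x) containing A, B, B*A^2 and B^2*A is all of H. -/
noncomputable section

/-- The defining relation of the Heisenberg–Weyl algebra: `a * b = b * a + 1`. -/
inductive HWRel (F : Type) [Field F] :
    FreeAlgebra F (Fin 2) → FreeAlgebra F (Fin 2) → Prop
  | comm : HWRel F (FreeAlgebra.ι F 0 * FreeAlgebra.ι F 1)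
      (FreeAlgebra.ι F 1 * FreeAlgebra.ι F 0 + 1)

/-- The Heisenberg–Weyl algebra over `F`: the quotient of the free algebra on two
generators by the two-sided ideal generated by `a*b - b*a - 1`. -/
abbrev HW (F : Type) [Field F] := RingQuot (HWRel F)

/-- The image `A` of the first generator. -/
def HW.A (F : Type) [Field F] : HW F :=
  RingQuot.mkAlgHom F (HWRel F) (FreeAlgebra.ι F 0)

/-- The image `B` of the second generator. -/
def HW.B (F : Type) [Field F] : HW F :=
  RingQuot.mkAlgHom F (HWRel F) (FreeAlgebra.ι F 1)

attribute [local instance 100] LieRing.ofAssociativeRing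

namespace HWAux

variable (F : Type) [Field F]

local notation "A" => HW.A F
local notation "B" => HW.B F

lemma hAB : A * B = B * A + 1 := by
  have := RingQuot.mkAlgHom_rel F (HWRel.comm (F := F))
  simpa [HW.A, HW.B, map_mul, map_add, map_one] using this

/-- `A * B^m = B^m * A + m • B^(m-1)` (junk-friendly `ℕ`-subtraction). -/
lemma hABpow (m : ℕ) : A * B ^ m = B ^ m * A + (m : F) • B ^ (m - 1) := by
  induction m with
  | zero => simp
  | succ m ih =>
    simp only [Nat.add_sub_cancel, Nat.cast_add, Nat.cast_one]
    have key : (m : F) • (B ^ (m - 1) * B) = (m : F) • B ^ m := by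
      cases m with
      | zero => simp
      | succ m => simp [pow_succ]
    calc A * B ^ (m+1) = (A * B ^ m) * B := by rw [mul_assoc, ← pow_succ]
      _ = B ^ m * (A * B) + (m : F) • (B ^ (m-1) * B) := by
          rw [ih]; simp [add_mul, smul_mul_assoc, mul_assoc]
      _ = B ^ (m+1) * A + ((m:ℕ)+1 : F) • B ^ m := by
          rw [hAB, key, mul_add, mul_one, ← mul_assoc, ← pow_succ]
          module

/-- `A^n * B = B * A^n + n • A^(n-1)`. -/
lemma hApowB (n : ℕ) : A ^ n * B = B * A ^ n + (n : F) • A ^ (n - 1) := by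
  induction n with
  | zero => simp
  | succ n ih =>
    simp only [Nat.add_sub_cancel, Nat.cast_add, Nat.cast_one]
    have key : (n : F) • (A * A ^ (n - 1)) = (n : F) • A ^ n := by
      cases n with
      | zero => simp
      | succ n => simp [← pow_succ']
    calc A ^ (n+1) * B = A * (A ^ n * B) := by rw [← mul_assoc, ← pow_succ']
      _ = (A * B) * A ^ n + (n : F) • (A * A ^ (n-1)) := by
          rw [ih]; simp [mul_add, mul_smul_comm, mul_assoc]
      _ = B * A ^ (n+1) + ((n:ℕ)+1 : F) • A ^ n := by
          rw [hAB, key, add_mul, one_mul, mul_assoc, ← pow_succ']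
          module

/-- normal-form multiplication lemmas -/
lemma B_mul_w (i j : ℕ) : B * (B^i * A^j) = B^(i+1) * A^j := by
  rw [← mul_assoc, ← pow_succ']

lemma w_mul_A (i j : ℕ) : (B^i * A^j) * A = B^i * A^(j+1) := by
  rw [mul_assoc, ← pow_succ]

lemma A_mul_w (i j : ℕ) :
    A * (B^i * A^j) = B^i * A^(j+1) + (i : F) • (B^(i-1) * A^j) := by
  rw [← mul_assoc, hABpow F i, add_mul, smul_mul_assoc, mul_assoc, ← pow_succ']

lemma w_mul_B (i j : ℕ) :
    (B^i * A^j) * B = B^(i+1) * A^j + (j : F) • (B^i * A^(j-1)) := by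
  rw [mul_assoc, hApowB F j, mul_add, mul_smul_comm, ← mul_assoc, ← pow_succ]

lemma hPmul (x : HW F) : (B * A^2) * x = B * (A * (A * x)) := by
  rw [pow_two]; simp [mul_assoc]

lemma hmulP (x : HW F) : x * (B * A^2) = ((x * B) * A) * A := by
  rw [pow_two]; simp [mul_assoc]

lemma hQmul (x : HW F) : (B^2 * A) * x = B * (B * (A * x)) := by
  rw [pow_two]; simp [mul_assoc]

lemma hmulQ (x : HW F) : x * (B^2 * A) = ((x * B) * B) * A := by
  rw [pow_two]; simp [mul_assoc]

/-- `⁅B A², B^m A^n⁆ = (2m - n) • B^m A^(n+1) + m(m-1) • B^(m-1) A^n`. -/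
lemma lieP (m n : ℕ) :
    ⁅B * A^2, B^m * A^n⁆
      = (2*(m:F) - n) • (B^m * A^(n+1)) + ((m:F) * ((m-1 : ℕ):F)) • (B^(m-1) * A^n) := by
  rw [Ring.lie_def, hPmul, hmulP]
  match m, n with
  | 0, 0 =>
    simp only [A_mul_w, B_mul_w, w_mul_A, w_mul_B, mul_add, add_mul, smul_add, smul_smul,
      mul_smul_comm, smul_mul_assoc, Nat.cast_zero, Nat.cast_one, Nat.cast_add, zero_smul,
      smul_zero, add_zero, zero_add, Nat.cast_ofNat]
    module
  | 0, (n+1) =>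
    simp only [A_mul_w, B_mul_w, w_mul_A, w_mul_B, mul_add, add_mul, smul_add, smul_smul,
      mul_smul_comm, smul_mul_assoc, Nat.add_sub_cancel, Nat.cast_zero, Nat.cast_one,
      Nat.cast_add, zero_smul, smul_zero, add_zero, zero_add, Nat.cast_ofNat]
    module
  | 1, 0 =>
    simp only [A_mul_w, B_mul_w, w_mul_A, w_mul_B, mul_add, add_mul, smul_add, smul_smul,
      mul_smul_comm, smul_mul_assoc, Nat.cast_zero, Nat.cast_one, Nat.cast_add, zero_smul,
      smul_zero, add_zero, zero_add, Nat.cast_ofNat, Nat.sub_self]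
    module
  | 1, (n+1) =>
    simp only [A_mul_w, B_mul_w, w_mul_A, w_mul_B, mul_add, add_mul, smul_add, smul_smul,
      mul_smul_comm, smul_mul_assoc, Nat.add_sub_cancel, Nat.cast_zero, Nat.cast_one,
      Nat.cast_add, zero_smul, smul_zero, add_zero, zero_add, Nat.cast_ofNat, Nat.sub_self]
    module
  | (m+2), 0 =>
    simp only [A_mul_w, B_mul_w, w_mul_A, w_mul_B, mul_add, add_mul, smul_add, smul_smul,
      mul_smul_comm, smul_mul_assoc, show m+2-1 = m+1 from rfl, show m+1-1 = m from rfl,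
      Nat.cast_zero, Nat.cast_one, Nat.cast_add, zero_smul,
      smul_zero, add_zero, zero_add, Nat.cast_ofNat]
    module
  | (m+2), (n+1) =>
    simp only [A_mul_w, B_mul_w, w_mul_A, w_mul_B, mul_add, add_mul, smul_add, smul_smul,
      mul_smul_comm, smul_mul_assoc, show m+2-1 = m+1 from rfl, show m+1-1 = m from rfl,
      Nat.add_sub_cancel, Nat.cast_zero, Nat.cast_one, Nat.cast_add, zero_smul,
      smul_zero, add_zero, zero_add, Nat.cast_ofNat]
    module

/-- `⁅B² A, B^m A^n⁆ = (m - 2n) • B^(m+1) A^n - n(n-1) • B^m A^(n-1)`. -/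
lemma lieQ (m n : ℕ) :
    ⁅B^2 * A, B^m * A^n⁆
      = ((m:F) - 2*n) • (B^(m+1) * A^n) - ((n:F) * ((n-1 : ℕ):F)) • (B^m * A^(n-1)) := by
  rw [Ring.lie_def, hQmul, hmulQ]
  match m, n with
  | 0, 0 =>
    simp only [A_mul_w, B_mul_w, w_mul_A, w_mul_B, mul_add, add_mul, smul_add, smul_smul,
      mul_smul_comm, smul_mul_assoc, Nat.cast_zero, Nat.cast_one, Nat.cast_add, zero_smul,
      smul_zero, add_zero, zero_add, Nat.cast_ofNat]
    module
  | 0, 1 =>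
    simp only [A_mul_w, B_mul_w, w_mul_A, w_mul_B, mul_add, add_mul, smul_add, smul_smul,
      mul_smul_comm, smul_mul_assoc, Nat.cast_zero, Nat.cast_one, Nat.cast_add, zero_smul,
      smul_zero, add_zero, zero_add, Nat.cast_ofNat, Nat.sub_self]
    module
  | 0, (n+2) =>
    simp only [A_mul_w, B_mul_w, w_mul_A, w_mul_B, mul_add, add_mul, smul_add, smul_smul,
      mul_smul_comm, smul_mul_assoc, show n+2-1 = n+1 from rfl, show n+1-1 = n from rfl,
      Nat.cast_zero, Nat.cast_one, Nat.cast_add, zero_smul,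
      smul_zero, add_zero, zero_add, Nat.cast_ofNat]
    module
  | (m+1), 0 =>
    simp only [A_mul_w, B_mul_w, w_mul_A, w_mul_B, mul_add, add_mul, smul_add, smul_smul,
      mul_smul_comm, smul_mul_assoc, Nat.add_sub_cancel, Nat.cast_zero, Nat.cast_one,
      Nat.cast_add, zero_smul, smul_zero, add_zero, zero_add, Nat.cast_ofNat]
    module
  | (m+1), 1 =>
    simp only [A_mul_w, B_mul_w, w_mul_A, w_mul_B, mul_add, add_mul, smul_add, smul_smul,
      mul_smul_comm, smul_mul_assoc, Nat.add_sub_cancel, Nat.cast_zero, Nat.cast_one,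
      Nat.cast_add, zero_smul, smul_zero, add_zero, zero_add, Nat.cast_ofNat, Nat.sub_self]
    module
  | (m+1), (n+2) =>
    simp only [A_mul_w, B_mul_w, w_mul_A, w_mul_B, mul_add, add_mul, smul_add, smul_smul,
      mul_smul_comm, smul_mul_assoc, show n+2-1 = n+1 from rfl, show n+1-1 = n from rfl,
      Nat.add_sub_cancel, Nat.cast_zero, Nat.cast_one, Nat.cast_add, zero_smul,
      smul_zero, add_zero, zero_add, Nat.cast_ofNat]
    module

/-- Solve for a Lie-span member from a bracket identity. -/
lemma solve_mem (S : LieSubalgebra F (HW F)) {c : F} {x y z : HW F} (hc : c ≠ 0)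
    (hz : z = c • x + y) (h1 : z ∈ S) (h2 : y ∈ S) : x ∈ S := by
  have hx : x = c⁻¹ • (z - y) := by
    rw [hz, add_sub_cancel_right, smul_smul, inv_mul_cancel₀ hc, one_smul]
  rw [hx]
  exact S.smul_mem _ (S.sub_mem h1 h2)

end HWAux

/-- As a Lie algebra (with bracket `⁅x,y⁆ = x*y - y*x`), the Heisenberg–Weyl algebra is
generated by the four elements `A`, `B`, `B*A^2`, `B^2*A`. -/
theorem hw_lie_generated_by_four (F : Type) [Field F] [CharZero F] :
    LieSubalgebra.lieSpan F (HW F)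
      {HW.A F, HW.B F, HW.B F * HW.A F ^ 2, HW.B F ^ 2 * HW.A F} = ⊤ := by
  set S := LieSubalgebra.lieSpan F (HW F)
      {HW.A F, HW.B F, HW.B F * HW.A F ^ 2, HW.B F ^ 2 * HW.A F} with hS
  set A := HW.A F
  set B := HW.B F
  have hA : A ∈ S := LieSubalgebra.subset_lieSpan (by simp [A, B])
  have hB : B ∈ S := LieSubalgebra.subset_lieSpan (by simp [A, B])
  have hP : B * A ^ 2 ∈ S := LieSubalgebra.subset_lieSpan (by simp [A, B])
  have hQ : B ^ 2 * A ∈ S := LieSubalgebra.subset_lieSpan (by simp [A, B])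
  -- all monomials B^m A^n lie in S
  have key : ∀ k m n : ℕ, m + n ≤ k → B ^ m * A ^ n ∈ S := by
    intro k
    induction k with
    | zero =>
      intro m n h
      obtain ⟨rfl, rfl⟩ : m = 0 ∧ n = 0 := by omega
      have h1 : (1 : HW F) ∈ S := by
        have : ⁅A, B⁆ = (1 : HW F) := by
          rw [Ring.lie_def, HWAux.hAB F]; abel
        rw [← this]; exact S.lie_mem hA hB
      simpa using h1
    | succ k ih =>
      intro m n hmn
      match m, n with
      | 0, 0 =>
        have h1 : (1 : HW F) ∈ S := by
          have : ⁅A, B⁆ = (1 : HW F) := by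
            rw [Ring.lie_def, HWAux.hAB F]; abel
          rw [← this]; exact S.lie_mem hA hB
        simpa using h1
      | 0, 1 => simpa using hA
      | 1, 0 => simpa using hB
      | 0, (n+2) =>
        have h := HWAux.lieP F 0 (n+1)
        simp only [Nat.cast_zero, mul_zero, zero_mul, zero_smul, add_zero, zero_sub] at h
        refine HWAux.solve_mem F S (c := -((n+1 : ℕ) : F)) ?_ (h.trans (add_zero _).symm)
          (S.lie_mem hP (ih 0 (n+1) (by omega))) S.zero_mem
        exact neg_ne_zero.mpr (Nat.cast_ne_zero.mpr (Nat.succ_ne_zero n))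
      | (m+2), 0 =>
        have h := HWAux.lieQ F (m+1) 0
        simp only [Nat.cast_zero, mul_zero, zero_mul, zero_smul, sub_zero, smul_zero,
          Nat.cast_add, Nat.cast_one] at h
        refine HWAux.solve_mem F S (c := (m:F)+1) ?_ (h.trans (add_zero _).symm)
          (S.lie_mem hQ (ih (m+1) 0 (by omega))) S.zero_mem
        exact_mod_cast Nat.succ_ne_zero m
      | (m+1), (n+1) =>
        by_cases hc : n = 2*m + 2
        · -- use Q-recursion from (m, n+1)
          have h := HWAux.lieQ F m (n+1)
          simp only [Nat.add_sub_cancel] at h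
          rw [sub_eq_add_neg] at h
          refine HWAux.solve_mem F S ?_ h (S.lie_mem hQ (ih m (n+1) (by omega)))
            (S.neg_mem (S.smul_mem _ (ih m n (by omega))))
          · refine sub_ne_zero_of_ne ?_
            have : m ≠ 2*(n+1) := by omega
            exact_mod_cast this
        · -- use P-recursion from (m+1, n)
          have h := HWAux.lieP F (m+1) n
          simp only [Nat.add_sub_cancel] at h
          refine HWAux.solve_mem F S ?_ h (S.lie_mem hP (ih (m+1) n (by omega)))
            (S.smul_mem _ (ih m n (by omega)))
          · refine sub_ne_zero_of_ne ?_
            have : 2*(m+1) ≠ n := by omega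
            exact_mod_cast this
  -- the monomials span HW F as an F-module
  set M : Submodule F (HW F) :=
    Submodule.span F (Set.range fun p : ℕ × ℕ => B ^ p.1 * A ^ p.2) with hM
  have hgen : ∀ p q : ℕ, B ^ p * A ^ q ∈ M :=
    fun p q => Submodule.subset_span ⟨(p, q), rfl⟩
  have hAmul : ∀ y ∈ M, A * y ∈ M := by
    intro y hy
    induction hy using Submodule.span_induction with
    | mem x hx =>
      obtain ⟨⟨p, q⟩, rfl⟩ := hx
      rw [HWAux.A_mul_w F p q]
      exact M.add_mem (hgen p (q+1)) (M.smul_mem _ (hgen (p-1) q))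
    | zero => simp
    | add x y _ _ hx hy => rw [mul_add]; exact M.add_mem hx hy
    | smul c x _ hx => rw [mul_smul_comm]; exact M.smul_mem _ hx
  have hBmul : ∀ y ∈ M, B * y ∈ M := by
    intro y hy
    induction hy using Submodule.span_induction with
    | mem x hx =>
      obtain ⟨⟨p, q⟩, rfl⟩ := hx
      rw [HWAux.B_mul_w F p q]
      exact hgen (p+1) q
    | zero => simp
    | add x y _ _ hx hy => rw [mul_add]; exact M.add_mem hx hy
    | smul c x _ hx => rw [mul_smul_comm]; exact M.smul_mem _ hx
  have hmul : ∀ w : FreeAlgebra F (Fin 2), ∀ y ∈ M,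
      RingQuot.mkAlgHom F (HWRel F) w * y ∈ M := by
    intro w
    induction w using FreeAlgebra.induction with
    | grade0 r =>
      intro y hy
      rw [AlgHom.commutes, ← Algebra.smul_def]
      exact M.smul_mem _ hy
    | grade1 i =>
      intro y hy
      fin_cases i
      · exact hAmul y hy
      · exact hBmul y hy
    | mul x y hx hy =>
      intro z hz
      rw [map_mul, mul_assoc]
      exact hx _ (hy z hz)
    | add x y hx hy =>
      intro z hz
      rw [map_add, add_mul]
      exact M.add_mem (hx z hz) (hy z hz)
  have hMtop : ∀ x : HW F, x ∈ M := by
    intro x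
    obtain ⟨w, rfl⟩ := RingQuot.mkAlgHom_surjective F (HWRel F) x
    have h1 : (1 : HW F) ∈ M := by simpa using hgen 0 0
    simpa using hmul w 1 h1
  -- conclude
  rw [eq_top_iff]
  rintro x -
  have hle : M ≤ S.toSubmodule := by
    rw [hM, Submodule.span_le]
    rintro _ ⟨⟨p, q⟩, rfl⟩
    exact key (p+q) p q le_rfl
  exact hle (hMtop x)
end
end

section
/- The F-linear span g in H of the set {B*A^2} ∪ {A^n : n ≥ 1} is closed under the commutator bracket, hence is a Lie subalgebra of H; moreover g equals the smallest Lie subalgebra of H containing the two elements A and B*A^2. -/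
noncomputable section

/-- The linear span of `{B*A^2} ∪ {A^n : n ≥ 1}`. -/
def hwG (F : Type) [Field F] : Submodule F (HW F) :=
  Submodule.span F ({HW.B F * HW.A F ^ 2} ∪ {x | ∃ n : ℕ, 1 ≤ n ∧ x = HW.A F ^ n})

attribute [local instance 100] LieRing.ofAssociativeRing

lemma HW.rel (F : Type) [Field F] : HW.A F * HW.B F = HW.B F * HW.A F + 1 := by
  have h := RingQuot.mkAlgHom_rel F (HWRel.comm (F := F))
  simpa [HW.A, HW.B, map_mul, map_add, map_one] using h

lemma HW.pow_mul_B (F : Type) [Field F] (n : ℕ) :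
    HW.A F ^ (n + 1) * HW.B F = HW.B F * HW.A F ^ (n + 1) + (n + 1) • HW.A F ^ n := by
  induction n with
  | zero => simpa using HW.rel F
  | succ n ih =>
    have h1 : HW.A F ^ (n + 2) * HW.B F = HW.A F * (HW.A F ^ (n + 1) * HW.B F) := by
      rw [← mul_assoc, ← pow_succ']
    have h2 : HW.A F * HW.A F ^ (n + 1) = HW.A F ^ (n + 1) * HW.A F := by
      rw [← pow_succ, ← pow_succ']
    rw [h1, ih, mul_add, ← mul_assoc, HW.rel F, mul_smul_comm, ← pow_succ',
      add_mul, one_mul, mul_assoc, h2, ← mul_assoc, mul_assoc (HW.B F), ← pow_succ,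
      succ_nsmul (HW.A F ^ (n + 1)) (n + 1)]
    abel

lemma HW.bracket_pow (F : Type) [Field F] (n : ℕ) :
    ⁅HW.A F ^ (n + 1), HW.B F * HW.A F ^ 2⁆ = (n + 1) • HW.A F ^ (n + 2) := by
  rw [Ring.lie_def, ← mul_assoc, HW.pow_mul_B, add_mul, smul_mul_assoc, ← pow_add,
    mul_assoc, ← pow_add, mul_assoc, ← pow_add, add_comm 2 (n + 1)]
  abel


/-- The span `g` of `{B*A^2} ∪ {A^n : n ≥ 1}` is closed under the commutator bracket,
and `g` equals the smallest Lie subalgebra of `H` containing `A` and `B*A^2`. -/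
theorem hwG_is_lie_subalgebra_and_spanned (F : Type) [Field F] [CharZero F] :
    (∀ x ∈ hwG F, ∀ y ∈ hwG F, ⁅x, y⁆ ∈ hwG F) ∧
      hwG F = (LieSubalgebra.lieSpan F (HW F)
        {HW.A F, HW.B F * HW.A F ^ 2}).toSubmodule := by
  set E := HW.B F * HW.A F ^ 2 with hEdef
  have hE : E ∈ hwG F := Submodule.subset_span (Set.mem_union_left _ rfl)
  have hpow : ∀ n : ℕ, 1 ≤ n → HW.A F ^ n ∈ hwG F := fun n hn =>
    Submodule.subset_span (Set.mem_union_right _ ⟨n, hn, rfl⟩)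
  have hnsmul : ∀ (m : ℕ) (v : HW F), v ∈ hwG F → m • v ∈ hwG F := fun m v hv => by
    rw [← Nat.cast_smul_eq_nsmul F]; exact Submodule.smul_mem _ _ hv
  have hgen : ∀ s ∈ ({E} ∪ {x | ∃ n : ℕ, 1 ≤ n ∧ x = HW.A F ^ n} : Set (HW F)),
      ∀ t ∈ ({E} ∪ {x | ∃ n : ℕ, 1 ≤ n ∧ x = HW.A F ^ n} : Set (HW F)),
      ⁅s, t⁆ ∈ hwG F := by
    rintro s (rfl | ⟨m, hm, rfl⟩) t (rfl | ⟨n, hn, rfl⟩)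
    · rw [lie_self]; exact zero_mem _
    · cases n with
      | zero => omega
      | succ k =>
        rw [← lie_skew, HW.bracket_pow]
        exact neg_mem (hnsmul _ _ (hpow (k + 2) (by omega)))
    · cases m with
      | zero => omega
      | succ k =>
        rw [HW.bracket_pow]
        exact hnsmul _ _ (hpow (k + 2) (by omega))
    · rw [Ring.lie_def, ← pow_add, ← pow_add, add_comm, sub_self]
      exact zero_mem _
  have hkey : ∀ x ∈ hwG F, ∀ y ∈ hwG F, ⁅x, y⁆ ∈ hwG F := by
    intro x hx y hy
    induction hx using Submodule.span_induction with
    | mem s hs =>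
      induction hy using Submodule.span_induction with
      | mem t ht => exact hgen s hs t ht
      | zero => rw [lie_zero]; exact zero_mem _
      | add a b _ _ ha hb => rw [lie_add]; exact add_mem ha hb
      | smul c a _ ha => rw [lie_smul]; exact Submodule.smul_mem _ _ ha
    | zero => rw [zero_lie]; exact zero_mem _
    | add a b _ _ ha hb => rw [add_lie]; exact add_mem ha hb
    | smul c a _ ha => rw [smul_lie]; exact Submodule.smul_mem _ _ ha
  refine ⟨hkey, ?_⟩
  set L := LieSubalgebra.lieSpan F (HW F) {HW.A F, E} with hL
  have hA : HW.A F ∈ L := LieSubalgebra.subset_lieSpan (Set.mem_insert _ _)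
  have hEL : E ∈ L := LieSubalgebra.subset_lieSpan (Set.mem_insert_iff.mpr (Or.inr rfl))
  have hAn : ∀ n : ℕ, HW.A F ^ (n + 1) ∈ L := by
    intro n
    induction n with
    | zero => simpa using hA
    | succ k ih =>
      have h := L.lie_mem ih hEL
      rw [HW.bracket_pow, ← Nat.cast_smul_eq_nsmul F] at h
      have hc : (((k + 1 : ℕ) : F)) ≠ 0 := by exact_mod_cast Nat.succ_ne_zero k
      have h2 := L.smul_mem (((k + 1 : ℕ) : F))⁻¹ h
      rwa [inv_smul_smul₀ hc] at h2
  apply le_antisymm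
  · apply Submodule.span_le.mpr
    rintro x (rfl | ⟨n, hn, rfl⟩)
    · exact hEL
    · cases n with
      | zero => omega
      | succ k => exact hAn k
  · set K : LieSubalgebra F (HW F) :=
      { hwG F with lie_mem' := fun {x y} hx hy => hkey x hx y hy } with hK
    have hLK : L ≤ K := by
      apply LieSubalgebra.lieSpan_le.mpr
      rintro x (rfl | rfl)
      · have h1 := hpow 1 le_rfl; rw [pow_one] at h1; exact h1
      · exact hE
    exact fun x hx => hLK hx
end
end

section
/- Let π : L → H be the unique Lie algebra homomorphism from the free Lie algebra L on generators α, β to (the Lie algebra underlying) H with π(α) = A and π(β) = B*A^2. Then the kernel of π equals the Lie ideal of L generated by the elements (ad α)((-ad β)^n(α)) for all integers n ≥ 1. (Equivalently: the Lie subalgebra g of H generated by A and B*A^2 has a presentation with generators A, Ω = B*A^2 and relations (ad A)((-ad Ω)^n(A)) = 0 for all n ≥ 1.) -/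
noncomputable section

/-- The free Lie algebra on two generators `α`, `β`. -/
abbrev FL (F : Type) [Field F] := FreeLieAlgebra F (Fin 2)

/-- The generator `α` of the free Lie algebra. -/
def FL.α (F : Type) [Field F] : FL F := FreeLieAlgebra.of F 0

/-- The generator `β` of the free Lie algebra. -/
def FL.β (F : Type) [Field F] : FL F := FreeLieAlgebra.of F 1

/-- `(-ad β)^n (α)` in the free Lie algebra: note `(-ad β)(y) = ⁅y, β⁆`. -/
def FL.negAdBetaPowAlpha (F : Type) [Field F] (n : ℕ) : FL F :=
  (fun y => ⁅y, FL.β F⁆)^[n] (FL.α F)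

attribute [local instance 100] LieRing.ofAssociativeRing

namespace HWP

open Polynomial

variable (F : Type) [Field F]

/-! ### Computations in the Heisenberg–Weyl algebra -/

def Ω : HW F := HW.B F * HW.A F ^ 2

lemma hw_comm : HW.A F * HW.B F = HW.B F * HW.A F + 1 := by
  have h := RingQuot.mkAlgHom_rel F (HWRel.comm (F := F))
  simpa only [HW.A, HW.B, map_mul, map_add, map_one] using h

lemma pow_comm (k : ℕ) :
    HW.A F ^ k * HW.B F * HW.A F = HW.B F * HW.A F ^ (k + 1) + (k : F) • HW.A F ^ k := by
  induction k with
  | zero => simp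
  | succ k ih =>
    have h1 : HW.A F ^ (k+1) * HW.B F * HW.A F = HW.A F * (HW.A F ^ k * HW.B F * HW.A F) := by
      rw [pow_succ']; noncomm_ring
    rw [h1, ih, mul_add, ← mul_assoc, hw_comm, mul_smul_comm, add_mul, one_mul,
      ← pow_succ', mul_assoc, ← pow_succ']
    push_cast [add_smul, one_smul]
    abel

lemma lie_pow_Omega (k : ℕ) :
    ⁅HW.A F ^ k, Ω F⁆ = (k : F) • HW.A F ^ (k + 1) := by
  have e1 : HW.A F ^ (k+1) * HW.A F = HW.A F * HW.A F * HW.A F ^ k := by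
    rw [← pow_succ, mul_assoc, ← pow_succ', ← pow_succ']
  rw [Ring.lie_def, Ω, sq, ← mul_assoc, ← mul_assoc, pow_comm, add_mul, smul_mul_assoc,
    ← pow_succ, mul_assoc, mul_assoc, e1]
  abel

/-! ### The polynomial representation -/

def dd : F[X] →ₗ[F] F[X] := Polynomial.derivative

def mulX : F[X] →ₗ[F] F[X] := LinearMap.mulLeft F (X : F[X])

def ρraw : FreeAlgebra F (Fin 2) →ₐ[F] Module.End F F[X] :=
  FreeAlgebra.lift F ![dd F, mulX F]

lemma ρrel : ∀ ⦃x y : FreeAlgebra F (Fin 2)⦄, HWRel F x y → ρraw F x = ρraw F y := by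
  rintro x y ⟨⟩
  simp only [map_mul, map_add, map_one, ρraw, FreeAlgebra.lift_ι_apply,
    Matrix.cons_val_zero, Matrix.cons_val_one, Matrix.head_cons]
  refine LinearMap.ext fun p => ?_
  simp only [Module.End.mul_apply, LinearMap.add_apply, Module.End.one_apply, dd, mulX,
    LinearMap.mulLeft_apply]
  rw [derivative_mul, derivative_X, one_mul]
  ring

def ρ : HW F →ₐ[F] Module.End F F[X] :=
  RingQuot.liftAlgHom F ⟨ρraw F, ρrel F⟩

lemma ρA : ρ F (HW.A F) = dd F := by
  rw [ρ, HW.A, RingQuot.liftAlgHom_mkAlgHom_apply, ρraw, FreeAlgebra.lift_ι_apply]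
  simp

lemma ρB : ρ F (HW.B F) = mulX F := by
  rw [ρ, HW.B, RingQuot.liftAlgHom_mkAlgHom_apply, ρraw, FreeAlgebra.lift_ι_apply]
  simp

/-- The expected images in `HW` of the spanning family of `g` modulo the relations. -/
def w : Option ℕ → HW F
  | none => Ω F
  | some n => (n.factorial : F) • HW.A F ^ (n + 1)

/-- A coefficient-extraction functional. -/
def Φ (q : F[X]) (j : ℕ) : HW F →ₗ[F] F :=
  (Polynomial.lcoeff F j).comp ((LinearMap.applyₗ q).comp (ρ F).toLinearMap)

lemma Φ_apply (q : F[X]) (j : ℕ) (x : HW F) : Φ F q j x = ((ρ F x) q).coeff j := rfl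

lemma ρ_pow_A (k : ℕ) (q : F[X]) : (ρ F (HW.A F ^ k)) q = derivative^[k] q := by
  rw [map_pow, ρA, Module.End.pow_apply]
  rfl

lemma ρΩ_apply (q : F[X]) : (ρ F (Ω F)) q = X * derivative (derivative q) := by
  rw [Ω, map_mul, Module.End.mul_apply, ρ_pow_A, ρB]
  rfl

lemma Φ_w_none (m : ℕ) : Φ F (X ^ (m + 1)) 0 (w F none) = 0 := by
  rw [Φ_apply]
  show ((ρ F (Ω F)) (X ^ (m+1))).coeff 0 = 0
  rw [ρΩ_apply, Polynomial.mul_coeff_zero, coeff_X_zero, zero_mul]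

lemma Φ_w_some (m n : ℕ) :
    Φ F (X ^ (m + 1)) 0 (w F (some n)) =
      if n = m then ((n.factorial : F) * ((m+1).factorial : F)) else 0 := by
  rw [Φ_apply]
  show ((ρ F ((n.factorial : F) • HW.A F ^ (n+1))) (X ^ (m+1))).coeff 0 = _
  rw [map_smul, LinearMap.smul_apply, ρ_pow_A, iterate_derivative_X_pow_eq_smul]
  simp only [coeff_smul, coeff_X_pow, smul_eq_mul]
  rcases lt_trichotomy n m with h | rfl | h
  · rw [if_neg (show ¬ n = m by omega), if_neg (show ¬ (0 : ℕ) = m + 1 - (n + 1) by omega),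
      mul_zero, mul_zero]
  · rw [Nat.sub_self, if_pos rfl, if_pos rfl, mul_one, Nat.descFactorial_self]
  · rw [if_neg (show ¬ n = m by omega), Nat.descFactorial_eq_zero_iff_lt.mpr (by omega)]
    push_cast
    simp

variable [CharZero F]

lemma indep : LinearIndependent F (w F) := by
  rw [linearIndependent_iff]
  intro l hl
  have hsome : ∀ m, l (some m) = 0 := by
    intro m
    have h0 := congrArg (Φ F (X ^ (m + 1)) 0) hl
    rw [map_zero, Finsupp.linearCombination_apply, map_finsuppSum] at h0
    simp only [map_smul, smul_eq_mul] at h0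
    rw [Finsupp.sum, Finset.sum_eq_single (some m)
      (fun b _ hb => ?_) (fun hb => ?_)] at h0
    · rw [Φ_w_some, if_pos rfl] at h0
      have h1 : ((m.factorial : F) * ((m+1).factorial : F)) ≠ 0 := by
        exact_mod_cast mul_ne_zero (Nat.cast_ne_zero.mpr m.factorial_ne_zero)
          (Nat.cast_ne_zero.mpr (m+1).factorial_ne_zero)
      exact (mul_eq_zero.mp h0).resolve_right h1
    · match b with
      | none => rw [Φ_w_none, mul_zero]
      | some n => rw [Φ_w_some, if_neg (fun h => hb (by rw [h])), mul_zero]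
    · rw [Finsupp.notMem_support_iff.mp hb, zero_mul]
  have hl2 : l = Finsupp.single none (l none) := by
    ext i
    match i with
    | none => rw [Finsupp.single_eq_same]
    | some n => rw [hsome n, Finsupp.single_eq_of_ne (by simp)]
  rw [hl2, Finsupp.linearCombination_single] at hl
  have h2 : Φ F (X ^ 2) 1 (w F none) = 2 := by
    rw [Φ_apply]
    show ((ρ F (Ω F)) (X ^ 2)).coeff 1 = 2
    rw [ρΩ_apply, derivative_X_pow]
    push_cast
    simp
  have h3 := congrArg (Φ F (X ^ 2) 1) hl
  rw [map_zero, map_smul, h2, smul_eq_mul] at h3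
  have h4 : l none = 0 := by
    have := mul_eq_zero.mp h3
    simpa [two_ne_zero] using this
  rw [hl2, h4, Finsupp.single_zero]

/-! ### The free Lie algebra side -/

def γ (n : ℕ) : FL F := FL.negAdBetaPowAlpha F n

lemma γ_zero : γ F 0 = FL.α F := rfl

lemma γ_succ (n : ℕ) : γ F (n + 1) = ⁅γ F n, FL.β F⁆ :=
  Function.iterate_succ_apply' _ n _

/-- The relator set. -/
def S : Set (FL F) := {x | ∃ n : ℕ, 1 ≤ n ∧ x = ⁅FL.α F, FL.negAdBetaPowAlpha F n⁆}

/-- The Lie ideal generated by the relators. -/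
def I : LieSubmodule F (FL F) (FL F) := LieSubmodule.lieSpan F (FL F) (S F)

lemma J (m n : ℕ) : ⁅γ F m, γ F n⁆ ∈ I F := by
  induction m generalizing n with
  | zero =>
    match n with
    | 0 => rw [γ_zero, lie_self]; exact (I F).zero_mem
    | n + 1 =>
      exact LieSubmodule.subset_lieSpan ⟨n + 1, Nat.succ_le_succ n.zero_le, by rw [γ_zero]; rfl⟩
  | succ m ih =>
    rw [γ_succ, lie_lie]
    refine sub_mem ?_ ((I F).lie_mem (ih n))
    have h : ⁅FL.β F, γ F n⁆ = -γ F (n + 1) := by rw [γ_succ, lie_skew]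
    rw [h, lie_neg]
    exact neg_mem (ih (n + 1))

/-- The candidate complement family. -/
def v : Option ℕ → FL F
  | none => FL.β F
  | some n => γ F n

def M : Submodule F (FL F) := Submodule.span F (Set.range (v F))

lemma bracket_vv (i j : Option ℕ) : ⁅v F i, v F j⁆ ∈ M F ⊔ (I F).toSubmodule := by
  match i, j with
  | none, none => rw [show v F none = FL.β F from rfl, lie_self]; exact zero_mem _
  | none, some n =>
    have h : ⁅v F none, v F (some n)⁆ = -v F (some (n + 1)) := by
      show ⁅FL.β F, γ F n⁆ = -γ F (n + 1)
      rw [γ_succ, lie_skew]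
    rw [h]
    exact neg_mem (le_sup_left (a := M F) (Submodule.subset_span ⟨some (n + 1), rfl⟩))
  | some n, none =>
    have h : ⁅v F (some n), v F none⁆ = v F (some (n + 1)) := (γ_succ F n).symm
    rw [h]
    exact le_sup_left (a := M F) (Submodule.subset_span ⟨some (n + 1), rfl⟩)
  | some m, some n =>
    exact le_sup_right (b := (I F).toSubmodule)
      ((LieSubmodule.mem_toSubmodule _).mpr (J F m n))

lemma bracket_MM {x y : FL F} (hx : x ∈ M F) (hy : y ∈ M F) :
    ⁅x, y⁆ ∈ M F ⊔ (I F).toSubmodule := by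
  induction hx using Submodule.span_induction with
  | mem x hx =>
    obtain ⟨i, rfl⟩ := hx
    induction hy using Submodule.span_induction with
    | mem y hy => obtain ⟨j, rfl⟩ := hy; exact bracket_vv F i j
    | zero => rw [lie_zero]; exact zero_mem _
    | add y z _ _ h1 h2 => rw [lie_add]; exact add_mem h1 h2
    | smul a y _ h1 => rw [lie_smul]; exact Submodule.smul_mem _ a h1
  | zero => rw [zero_lie]; exact zero_mem _
  | add x z _ _ h1 h2 => rw [add_lie]; exact add_mem h1 h2
  | smul a x _ h1 => rw [smul_lie]; exact Submodule.smul_mem _ a h1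

lemma mem_I_sup {x : FL F} (hx : x ∈ (I F).toSubmodule) : x ∈ I F :=
  (LieSubmodule.mem_toSubmodule _).mp hx

/-- The sum `M + I` is a Lie subalgebra. -/
def K : LieSubalgebra F (FL F) where
  toSubmodule := M F ⊔ (I F).toSubmodule
  lie_mem' := by
    intro x y hx hy
    obtain ⟨mx, hmx, ix, hix, rfl⟩ := Submodule.mem_sup.mp hx
    obtain ⟨my, hmy, iy, hiy, rfl⟩ := Submodule.mem_sup.mp hy
    have h1 : ⁅mx, my⁆ ∈ M F ⊔ (I F).toSubmodule := bracket_MM F hmx hmy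
    have h2 : ⁅mx, iy⁆ ∈ I F := (I F).lie_mem (mem_I_sup F hiy)
    have h3 : ⁅ix, my⁆ ∈ I F := by
      rw [← lie_skew]
      exact neg_mem ((I F).lie_mem (mem_I_sup F hix))
    have h4 : ⁅ix, iy⁆ ∈ I F := (I F).lie_mem (mem_I_sup F hiy)
    have expand : ⁅mx + ix, my + iy⁆ = ⁅mx, my⁆ + (⁅mx, iy⁆ + (⁅ix, my⁆ + ⁅ix, iy⁆)) := by
      rw [add_lie, lie_add, lie_add]; abel
    rw [expand]
    refine add_mem h1 (le_sup_right (a := M F) ?_)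
    exact (LieSubmodule.mem_toSubmodule _).mpr (add_mem h2 (add_mem h3 h4))

lemma α_mem_K : FL.α F ∈ K F :=
  le_sup_left (a := M F) (Submodule.subset_span ⟨some 0, rfl⟩)

lemma β_mem_K : FL.β F ∈ K F :=
  le_sup_left (a := M F) (Submodule.subset_span ⟨none, rfl⟩)

/-- Everything lies in `M + I`. -/
lemma gen (x : FL F) : x ∈ M F ⊔ (I F).toSubmodule := by
  let c : Fin 2 → K F := ![⟨FL.α F, α_mem_K F⟩, ⟨FL.β F, β_mem_K F⟩]
  let g : FL F →ₗ⁅F⁆ K F := FreeLieAlgebra.lift F c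
  have h : (K F).incl.comp g = LieHom.id := by
    apply FreeLieAlgebra.hom_ext
    intro i
    fin_cases i <;>
      simp only [LieHom.comp_apply, LieHom.id_apply, g, FreeLieAlgebra.lift_of_apply] <;> rfl
  have hx : (K F).incl (g x) = x := LieHom.congr_fun h x
  exact hx ▸ (g x).2

lemma smul_lie' (c : F) (x y : HW F) : ⁅c • x, y⁆ = c • ⁅x, y⁆ := by
  rw [Ring.lie_def, Ring.lie_def, smul_sub, smul_mul_assoc, mul_smul_comm]

lemma lie_smul' (c : F) (x y : HW F) : ⁅x, c • y⁆ = c • ⁅x, y⁆ := by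
  rw [Ring.lie_def, Ring.lie_def, smul_sub, smul_mul_assoc, mul_smul_comm]

variable {F}

lemma pi_gamma (π : FL F →ₗ⁅F⁆ HW F) (hA : π (FL.α F) = HW.A F)
    (hB : π (FL.β F) = HW.B F * HW.A F ^ 2) (n : ℕ) :
    π (γ F n) = (n.factorial : F) • HW.A F ^ (n + 1) := by
  induction n with
  | zero => rw [γ_zero, hA]; simp
  | succ n ih =>
    rw [γ_succ, LieHom.map_lie, ih, hB, ← Ω, smul_lie', lie_pow_Omega, smul_smul,
      Nat.factorial_succ]
    push_cast
    ring_nf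

lemma pi_v (π : FL F →ₗ⁅F⁆ HW F) (hA : π (FL.α F) = HW.A F)
    (hB : π (FL.β F) = HW.B F * HW.A F ^ 2) (i : Option ℕ) :
    π (v F i) = w F i := by
  match i with
  | none => exact hB
  | some n => exact pi_gamma π hA hB n

lemma pi_negAd (π : FL F →ₗ⁅F⁆ HW F) (hA : π (FL.α F) = HW.A F)
    (hB : π (FL.β F) = HW.B F * HW.A F ^ 2) (n : ℕ) :
    π (FL.negAdBetaPowAlpha F n) = (n.factorial : F) • HW.A F ^ (n + 1) :=
  pi_gamma π hA hB n

lemma ideal_le_ker (π : FL F →ₗ⁅F⁆ HW F) (hA : π (FL.α F) = HW.A F)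
    (hB : π (FL.β F) = HW.B F * HW.A F ^ 2) : I F ≤ π.ker := by
  rw [I, LieSubmodule.lieSpan_le]
  rintro x ⟨n, hn, rfl⟩
  rw [SetLike.mem_coe, LieHom.mem_ker, LieHom.map_lie, hA,
    pi_negAd π hA hB n, lie_smul', Ring.lie_def, ← pow_succ', ← pow_succ, sub_self, smul_zero]

lemma inj_on_M (π : FL F →ₗ⁅F⁆ HW F) (hA : π (FL.α F) = HW.A F)
    (hB : π (FL.β F) = HW.B F * HW.A F ^ 2) {x : FL F} (hx : x ∈ M F) (h0 : π x = 0) :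
    x = 0 := by
  obtain ⟨c, rfl⟩ := Finsupp.mem_span_range_iff_exists_finsupp.mp hx
  have h1 : Finsupp.linearCombination F (w F) c = 0 := by
    rw [← h0, Finsupp.linearCombination_apply]
    have hmap : π.toLinearMap (c.sum fun i a => a • v F i)
        = c.sum fun i a => π.toLinearMap (a • v F i) := map_finsuppSum _ _ _
    simp only [LieHom.coe_toLinearMap] at hmap
    rw [hmap]
    refine Finsupp.sum_congr fun i _ => ?_
    rw [map_smul, pi_v π hA hB]
  rw [linearIndependent_iff.mp (indep F) c h1]
  simp

end HWP

/-- If `π : L → H` is the (unique) Lie algebra homomorphism from the free Lie algebra on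
`α`, `β` to the Heisenberg–Weyl algebra with `π α = A` and `π β = B*A^2`, then `ker π` is
the Lie ideal generated by the elements `(ad α)((-ad β)^n (α))` for `n ≥ 1`. -/
theorem hwG_presentation (F : Type) [Field F] [CharZero F]
    (π : FL F →ₗ⁅F⁆ HW F) (hA : π (FL.α F) = HW.A F)
    (hB : π (FL.β F) = HW.B F * HW.A F ^ 2) :
    π.ker = LieSubmodule.lieSpan F (FL F)
      {x | ∃ n : ℕ, 1 ≤ n ∧ x = ⁅FL.α F, FL.negAdBetaPowAlpha F n⁆} := by
  have hIk : HWP.I F ≤ π.ker := HWP.ideal_le_ker π hA hB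
  refine le_antisymm ?_ hIk
  intro x hx
  obtain ⟨m, hm, i, hi, rfl⟩ := Submodule.mem_sup.mp (HWP.gen F x)
  have hiI : i ∈ HWP.I F := HWP.mem_I_sup F hi
  have hπi : π i = 0 := LieHom.mem_ker.mp (hIk hiI)
  have hπm : π m = 0 := by
    have := LieHom.mem_ker.mp hx
    rw [map_add, hπi, add_zero] at this
    exact this
  rw [HWP.inj_on_M π hA hB hm hπm, zero_add]
  exact hiI
end
end

section
/- For every integer k ≥ 1, the k-th term of the lower central series of the Lie algebra g — defined by C^0(g) = g and C^k(g) = [g, C^{k-1}(g)], the F-linear span of all brackets [x, y] with x ∈ g and y ∈ C^{k-1}(g) — equals the F-linear span of {A^n : n ≥ k+1}. -/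
noncomputable section

/-- The lower central series of `g`: `C^0 = g`, `C^{k+1} = span [g, C^k]`. -/
def hwGlcs (F : Type) [Field F] : ℕ → Submodule F (HW F)
  | 0 => hwG F
  | k + 1 => Submodule.span F {z | ∃ x ∈ hwG F, ∃ y ∈ hwGlcs F k, z = ⁅x, y⁆}

/-!
Since `⁅A, B⁆ = 1`, the element `B * A` acts on `A ^ n` by `-n`, so
`⁅B * A ^ 2, A ^ n⁆ = -n A ^ (n + 1)`, while powers of `A` commute with each other. Hence
bracketing with `g` raises the lowest power of `A` by exactly one, and in characteristic zero
every `A ^ (n + 1)` with `n ≥ 1` is itself such a bracket.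
-/

section

attribute [local instance] LieRing.ofAssociativeRing

variable {R : Type*} [Ring R] {a b : R}

theorem lie_mul_pow_of_lie_eq_one (h : ⁅a, b⁆ = 1) (n : ℕ) :
    ⁅b * a, a ^ n⁆ = -(n • a ^ n) := by
  induction n with
  | zero => simp [Ring.lie_def]
  | succ n ih =>
    have hba : ⁅b * a, a⁆ = -a := by
      rw [Ring.lie_def] at h ⊢
      rw [mul_assoc, ← neg_one_mul, ← h]
      noncomm_ring
    have leibniz : ⁅b * a, a ^ n * a⁆ = ⁅b * a, a ^ n⁆ * a + a ^ n * ⁅b * a, a⁆ := by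
      simp only [Ring.lie_def]
      noncomm_ring
    rw [pow_succ, leibniz, ih, hba, succ_nsmul, neg_mul, smul_mul_assoc, mul_neg, neg_add]

theorem lie_mul_sq_pow_of_lie_eq_one (h : ⁅a, b⁆ = 1) (n : ℕ) :
    ⁅b * a ^ 2, a ^ n⁆ = -(n • a ^ (n + 1)) := by
  have hcomm : a ^ n * a = a * a ^ n := pow_mul_comm' a n
  calc ⁅b * a ^ 2, a ^ n⁆ = ⁅b * a, a ^ n⁆ * a := by
        simp only [Ring.lie_def, sub_mul, pow_two, mul_assoc, hcomm]
    _ = _ := by rw [lie_mul_pow_of_lie_eq_one h, neg_mul, smul_mul_assoc, pow_succ]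

namespace HW

variable (F : Type) [Field F]

theorem lie_A_B : ⁅A F, B F⁆ = 1 := by
  rw [Ring.lie_def, A, B, ← map_mul, ← map_mul, RingQuot.mkAlgHom_rel F HWRel.comm, map_add,
    map_one, add_sub_cancel_left]

def spanPowGt (k : ℕ) : Submodule F (HW F) :=
  Submodule.span F {x | ∃ n : ℕ, k + 1 ≤ n ∧ x = A F ^ n}

theorem spanPowGt_zero_le_hwG : spanPowGt F 0 ≤ hwG F :=
  Submodule.span_mono Set.subset_union_right

theorem hwGlcs_succ (k : ℕ) :
    hwGlcs F (k + 1) = Submodule.map₂ (LieAlgebra.ad F (HW F)) (hwG F) (hwGlcs F k) := by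
  rw [Submodule.map₂_eq_span_image2, hwGlcs]
  congr 1
  ext z
  simp [Set.image2, eq_comm]

variable {F}

theorem lie_B_mul_A_sq_pow (n : ℕ) : ⁅B F * A F ^ 2, A F ^ n⁆ = -((n : F) • A F ^ (n + 1)) := by
  rw [lie_mul_sq_pow_of_lie_eq_one (lie_A_B F), Nat.cast_smul_eq_nsmul]

theorem lie_pow_mem_spanPowGt {x : HW F} (hx : x ∈ hwG F) {k n : ℕ} (hn : k + 1 ≤ n) :
    ⁅x, A F ^ n⁆ ∈ spanPowGt F (k + 1) := by
  induction hx using Submodule.span_induction with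
  | mem s hs =>
    rcases hs with rfl | ⟨m, -, rfl⟩
    · rw [lie_B_mul_A_sq_pow]
      exact neg_mem (Submodule.smul_mem _ _ (Submodule.subset_span ⟨n + 1, by omega, rfl⟩))
    · rw [Ring.lie_def, ← pow_add, ← pow_add, add_comm m n, sub_self]
      exact zero_mem _
  | zero => simp
  | add x y _ _ hx hy => rw [add_lie]; exact add_mem hx hy
  | smul c x _ hx => rw [smul_lie]; exact Submodule.smul_mem _ c hx

theorem map₂_ad_hwG_self_le :
    Submodule.map₂ (LieAlgebra.ad F (HW F)) (hwG F) (hwG F) ≤ spanPowGt F 1 := by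
  have hBA : B F * A F ^ 2 ∈ hwG F := Submodule.subset_span (Or.inl rfl)
  rw [hwG, Submodule.map₂_span_span, Submodule.span_le, Set.image2_subset_iff]
  rintro s hs t (rfl | ⟨n, hn, rfl⟩)
  · rcases hs with rfl | ⟨m, hm, rfl⟩
    · simp
    · change ⁅A F ^ m, B F * A F ^ 2⁆ ∈ spanPowGt F 1
      rw [← lie_skew]
      exact neg_mem (lie_pow_mem_spanPowGt hBA hm)
  · exact lie_pow_mem_spanPowGt (Submodule.subset_span hs) hn

variable [CharZero F]

theorem map₂_ad_hwG_spanPowGt (k : ℕ) :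
    Submodule.map₂ (LieAlgebra.ad F (HW F)) (hwG F) (spanPowGt F k) = spanPowGt F (k + 1) := by
  apply le_antisymm
  · rw [← Submodule.span_eq (hwG F), spanPowGt, Submodule.map₂_span_span, Submodule.span_le,
      Set.image2_subset_iff]
    rintro x hx _ ⟨n, hn, rfl⟩
    exact lie_pow_mem_spanPowGt hx hn
  · rw [spanPowGt, Submodule.span_le]
    rintro _ ⟨_ | n, hn, rfl⟩
    · omega
    have hn0 : (n : F) ≠ 0 := Nat.cast_ne_zero.mpr (by omega)
    have hA : A F ^ (n + 1) = -((n : F)⁻¹ • ⁅B F * A F ^ 2, A F ^ n⁆) := by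
      rw [lie_B_mul_A_sq_pow, smul_neg, neg_neg, smul_smul, inv_mul_cancel₀ hn0, one_smul]
    rw [SetLike.mem_coe, hA]
    exact neg_mem <| Submodule.smul_mem _ _ <| Submodule.apply_mem_map₂ _
      (Submodule.subset_span (Or.inl rfl)) (Submodule.subset_span ⟨n, by omega, rfl⟩)

end HW

end

/-- For every `k ≥ 1`, the `k`-th term of the lower central series of `g` equals the
linear span of `{A^n : n ≥ k+1}`. -/
theorem hwG_lower_central_series (F : Type) [Field F] [CharZero F] :
    ∀ k : ℕ, 1 ≤ k → hwGlcs F k =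
      Submodule.span F {x | ∃ n : ℕ, k + 1 ≤ n ∧ x = HW.A F ^ n} := by
  intro k hk
  change hwGlcs F k = HW.spanPowGt F k
  induction k, hk using Nat.le_induction with
  | base =>
    rw [HW.hwGlcs_succ]
    exact le_antisymm HW.map₂_ad_hwG_self_le <| (HW.map₂_ad_hwG_spanPowGt 0).ge.trans
      (Submodule.map₂_le_map₂_right (HW.spanPowGt_zero_le_hwG F))
  | succ k _ ih =>
    rw [HW.hwGlcs_succ, ih]
    exact HW.map₂_ad_hwG_spanPowGt k
end
end

section
/- The Lie algebra g is solvable; in fact its derived algebra [g, g] is abelian, so the derived series of g reaches zero after two steps: [[g,g],[g,g]] = 0. -/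
/-!
From `⁅A, B⁆ = 1` one gets `⁅A ^ (n + 1), B⁆ = (n + 1) A ^ n`, hence
`⁅B A ^ 2, A ^ (n + 1)⁆ = -(n + 1) A ^ (n + 2)`. So the bracket of any two spanning vectors of `g`
lies in the span of the positive powers of `A`, and by bilinearity so does all of `[g, g]`.
Powers of `A` commute, so `[g, g]` is abelian.
-/

noncomputable section

/-- The derived algebra `[g, g]`: the span of all brackets of elements of `g`. -/
def hwGderived (F : Type) [Field F] : Submodule F (HW F) :=
  Submodule.span F {z | ∃ x ∈ hwG F, ∃ y ∈ hwG F, z = ⁅x, y⁆}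

theorem Submodule.lie_mem_of_mem_span {R A : Type*} [CommRing R] [Ring A] [Algebra R A]
    {s t : Set A} {p : Submodule R A} (h : ∀ x ∈ s, ∀ y ∈ t, ⁅x, y⁆ ∈ p) {x y : A}
    (hx : x ∈ span R s) (hy : y ∈ span R t) : ⁅x, y⁆ ∈ p := by
  have hxy := apply_mem_map₂ (LinearMap.mul R A - (LinearMap.mul R A).flip) hx hy
  rw [map₂_span_span] at hxy
  refine span_le.2 ?_ hxy
  rintro _ ⟨x, hx, y, hy, rfl⟩
  exact h x hx y hy

section

variable {R : Type*} [Ring R] {a b : R}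

theorem lie_pow_succ_of_lie_eq_one (h : ⁅a, b⁆ = 1) (n : ℕ) :
    ⁅a ^ (n + 1), b⁆ = (n + 1) • a ^ n := by
  induction n with
  | zero => simpa using h
  | succ n ih =>
    calc ⁅a ^ (n + 1 + 1), b⁆ = a ^ (n + 1) * ⁅a, b⁆ + ⁅a ^ (n + 1), b⁆ * a := by
          simp only [Ring.lie_def, pow_succ _ (n + 1)]; noncomm_ring
      _ = (n + 1 + 1) • a ^ (n + 1) := by
          rw [h, ih, mul_one, smul_mul_assoc, ← pow_succ, succ_nsmul' _ (n + 1)]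

theorem lie_mul_sq_pow_succ_of_lie_eq_one (h : ⁅a, b⁆ = 1) (n : ℕ) :
    ⁅b * a ^ 2, a ^ (n + 1)⁆ = -((n + 1) • a ^ (n + 2)) := by
  calc ⁅b * a ^ 2, a ^ (n + 1)⁆ = -⁅a ^ (n + 1), b⁆ * a ^ 2 := by
        rw [Ring.lie_def, Ring.lie_def, neg_sub, mul_assoc,
          ((Commute.refl a).pow_pow 2 (n + 1)).eq, sub_mul, mul_assoc (a ^ (n + 1)), mul_assoc b]
    _ = -((n + 1) • a ^ (n + 2)) := by
        rw [lie_pow_succ_of_lie_eq_one h, neg_mul, smul_mul_assoc, ← pow_add]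

end

section

variable {R A : Type*} [CommRing R] [Ring A] [Algebra R A]

theorem lie_eq_zero_of_mem_span_of_commute {s : Set A} (hs : ∀ x ∈ s, ∀ y ∈ s, Commute x y)
    {x y : A} (hx : x ∈ Submodule.span R s) (hy : y ∈ Submodule.span R s) : ⁅x, y⁆ = 0 :=
  (Submodule.mem_bot R).1 <|
    Submodule.lie_mem_of_mem_span (fun x hx y hy ↦ (hs x hx y hy).lie_eq ▸ zero_mem _) hx hy

variable {a b : A}

theorem lie_mem_span_pow_of_lie_eq_one (h : ⁅a, b⁆ = 1) {x y : A}
    (hx : x ∈ Submodule.span R ({b * a ^ 2} ∪ {x | ∃ n : ℕ, 1 ≤ n ∧ x = a ^ n}))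
    (hy : y ∈ Submodule.span R ({b * a ^ 2} ∪ {x | ∃ n : ℕ, 1 ≤ n ∧ x = a ^ n})) :
    ⁅x, y⁆ ∈ Submodule.span R {x | ∃ n : ℕ, 1 ≤ n ∧ x = a ^ n} := by
  have h_mixed : ∀ n, 1 ≤ n →
      ⁅b * a ^ 2, a ^ n⁆ ∈ Submodule.span R {x | ∃ n : ℕ, 1 ≤ n ∧ x = a ^ n} := by
    intro n hn
    obtain ⟨m, rfl⟩ := Nat.exists_eq_add_of_le' hn
    rw [lie_mul_sq_pow_succ_of_lie_eq_one h]
    refine neg_mem (nsmul_mem (Submodule.subset_span ?_) _)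
    exact ⟨m + 2, by omega, rfl⟩
  refine Submodule.lie_mem_of_mem_span ?_ hx hy
  rintro _ (rfl | ⟨m, hm, rfl⟩) _ (rfl | ⟨n, hn, rfl⟩)
  · rw [Ring.lie_def, sub_self]; exact zero_mem _
  · exact h_mixed n hn
  · rw [Ring.lie_def, ← neg_sub, ← Ring.lie_def]; exact neg_mem (h_mixed m hm)
  · rw [((Commute.refl a).pow_pow m n).lie_eq]; exact zero_mem _

end

theorem HW.lie_A_B_s5 (F : Type) [Field F] : ⁅HW.A F, HW.B F⁆ = 1 := by
  have h := RingQuot.mkAlgHom_rel F (HWRel.comm (F := F))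
  simp only [map_mul, map_add, map_one] at h
  rw [Ring.lie_def, HW.A, HW.B, h, add_sub_cancel_left]

theorem hwG_solvable_general (F : Type) [Field F] :
    (∀ x ∈ hwGderived F, ∀ y ∈ hwGderived F, ⁅x, y⁆ = (0 : HW F)) ∧
      Submodule.span F
        {z | ∃ x ∈ hwGderived F, ∃ y ∈ hwGderived F, z = ⁅x, y⁆} = ⊥ := by
  have hle : hwGderived F ≤ Submodule.span F {x | ∃ n : ℕ, 1 ≤ n ∧ x = HW.A F ^ n} :=
    Submodule.span_le.2 fun _ ⟨_, hx, _, hy, hz⟩ ↦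
      hz ▸ lie_mem_span_pow_of_lie_eq_one (HW.lie_A_B_s5 F) hx hy
  have habelian : ∀ x ∈ hwGderived F, ∀ y ∈ hwGderived F, ⁅x, y⁆ = (0 : HW F) :=
    fun x hx y hy ↦ lie_eq_zero_of_mem_span_of_commute
      (by rintro _ ⟨m, -, rfl⟩ _ ⟨n, -, rfl⟩; exact (Commute.refl _).pow_pow m n) (hle hx) (hle hy)
  refine ⟨habelian, Submodule.span_eq_bot.2 ?_⟩
  rintro _ ⟨x, hx, y, hy, rfl⟩
  exact habelian x hx y hy

/-- `g` is solvable; in fact its derived algebra `[g, g]` is abelian, so the derived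
series reaches zero after two steps: `[[g,g],[g,g]] = 0`. -/
theorem hwG_solvable (F : Type) [Field F] [CharZero F] :
    (∀ x ∈ hwGderived F, ∀ y ∈ hwGderived F, ⁅x, y⁆ = (0 : HW F)) ∧
      Submodule.span F
        {z | ∃ x ∈ hwGderived F, ∃ y ∈ hwGderived F, z = ⁅x, y⁆} = ⊥ :=
  hwG_solvable_general F
end
end

section
/- The Heisenberg–Weyl algebra H is generated as a Lie algebra by the four elements A, B*A^2, B and A*B^2; that is, the smallest Lie subalgebra of H containing A, B*A^2, B and A*B^2 is all of H. (Here B = φ(A) and A*B^2 = φ(B*A^2), where φ is the automorphism of H with φ(A) = B, φ(B) = -A.) -/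
noncomputable section

attribute [local instance 100] LieRing.ofAssociativeRing

namespace HWProof

variable {F : Type} [Field F]

local notation "A" => HW.A F
local notation "B" => HW.B F

lemma hrel : A * B = B * A + 1 := by
  have h := RingQuot.mkAlgHom_rel F (HWRel.comm (F := F))
  simpa [HW.A, HW.B] using h

lemma W1 : ∀ m : ℕ, A * B ^ m = B ^ m * A + (m : F) • B ^ (m - 1)
  | 0 => by simp
  | (m+1) => by
      have hs : ((m:F)) • (B ^ (m-1) * B) = (m : F) • B ^ m := by
        cases m with
        | zero => simp
        | succ k => norm_num [← pow_succ]
      have hc : ((m+1 : ℕ) : F) = (m : F) + 1 := by push_cast; ring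
      calc A * B ^ (m+1) = (A * B ^ m) * B := by rw [pow_succ, mul_assoc]
        _ = (B ^ m * A + (m:F) • B ^ (m-1)) * B := by rw [W1 m]
        _ = B ^ m * (A * B) + (m:F) • (B ^ (m-1) * B) := by
              rw [add_mul, mul_assoc, smul_mul_assoc]
        _ = B ^ m * (B * A + 1) + (m:F) • B ^ m := by rw [hrel, hs]
        _ = B ^ (m+1) * A + ((m+1:ℕ):F) • B ^ ((m+1) - 1) := by
              rw [mul_add, mul_one, ← mul_assoc, ← pow_succ, hc, add_smul, one_smul]
              simp; abel

lemma W2 : ∀ n : ℕ, A ^ n * B = B * A ^ n + (n : F) • A ^ (n - 1)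
  | 0 => by simp
  | (n+1) => by
      have hs : ((n:F)) • (A * A ^ (n-1)) = (n : F) • A ^ n := by
        cases n with
        | zero => simp
        | succ k => norm_num [← pow_succ']
      have hc : ((n+1 : ℕ) : F) = (n : F) + 1 := by push_cast; ring
      calc A ^ (n+1) * B = A * (A ^ n * B) := by rw [pow_succ', mul_assoc]
        _ = A * (B * A ^ n + (n:F) • A ^ (n-1)) := by rw [W2 n]
        _ = (A * B) * A ^ n + (n:F) • (A * A ^ (n-1)) := by
              rw [mul_add, mul_assoc, mul_smul_comm]
        _ = (B * A + 1) * A ^ n + (n:F) • A ^ n := by rw [hrel, hs]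
        _ = B * A ^ (n+1) + ((n+1:ℕ):F) • A ^ ((n+1) - 1) := by
              rw [add_mul, one_mul, mul_assoc, ← pow_succ', hc, add_smul, one_smul]
              simp; abel


lemma N1 (m n : ℕ) : A * (B ^ m * A ^ n)
    = B ^ m * A ^ (n+1) + (m : F) • (B ^ (m-1) * A ^ n) := by
  rw [← mul_assoc, W1, add_mul, smul_mul_assoc, mul_assoc, ← pow_succ']

lemma N2 (m n : ℕ) : (B ^ m * A ^ n) * B
    = B ^ (m+1) * A ^ n + (n : F) • (B ^ m * A ^ (n-1)) := by
  rw [mul_assoc, W2, mul_add, ← mul_assoc, ← pow_succ, mul_smul_comm]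

lemma N3 (m n : ℕ) : (B ^ m * A ^ n) * A = B ^ m * A ^ (n+1) := by
  rw [mul_assoc, ← pow_succ]

lemma N4 (m n : ℕ) : B * (B ^ m * A ^ n) = B ^ (m+1) * A ^ n := by
  rw [← mul_assoc, ← pow_succ']

lemma CA (m n : ℕ) : ⁅A, B ^ m * A ^ n⁆ = (m : F) • (B ^ (m-1) * A ^ n) := by
  rw [Ring.lie_def, N1, N3]; abel

lemma CB (m n : ℕ) : ⁅B, B ^ m * A ^ n⁆ = (-(n : F)) • (B ^ m * A ^ (n-1)) := by
  rw [Ring.lie_def, N2, N4]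
  module

lemma mulLie (a b c : HW F) : ⁅a * b, c⁆ = a * ⁅b, c⁆ + ⁅a, c⁆ * b := by
  simp only [Ring.lie_def, mul_sub, sub_mul, mul_assoc]; abel


lemma N5 (m n : ℕ) : (B ^ m * A ^ n) * (A * A) = B ^ m * A ^ (n+1+1) := by
  rw [← mul_assoc, N3, N3]

lemma F1 (m n : ℕ) : ⁅B * A^2, B^m * A^n⁆
    = (2*(m:F) - n) • (B^m * A^(n+1)) + ((m:F) * ((m:F)-1)) • (B^(m-1) * A^n) := by
  rw [pow_two, mulLie, mulLie, CA, CB]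
  rcases n with _|n <;> rcases m with _|_|m <;>
    simp only [Nat.add_sub_cancel, Nat.cast_zero, Nat.cast_add, Nat.cast_one,
      mul_smul_comm, smul_mul_assoc, smul_add, smul_smul, mul_add, add_mul,
      N1, N3, N4, N5, zero_smul, smul_zero, zero_mul, mul_zero,
      add_zero, zero_add, neg_zero, Nat.zero_sub, Nat.sub_self] <;>
    module


lemma N6 (x : HW F) : x * (B * B) = (x * B) * B := by
  rw [mul_assoc]

lemma F2 (m n : ℕ) : ⁅A * B^2, B^m * A^n⁆
    = ((m:F) - 2*n) • (B^(m+1) * A^n) + (-(n:F) * ((n:F)+1)) • (B^m * A^(n-1)) := by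
  rw [pow_two, mulLie, mulLie, CB, CA]
  rcases m with _|m <;> rcases n with _|_|n <;>
    simp only [Nat.add_sub_cancel, Nat.cast_zero, Nat.cast_add, Nat.cast_one,
      N6, mul_smul_comm, smul_mul_assoc, smul_add, smul_smul, mul_add, add_mul,
      N1, N2, N3, N4, N5, zero_smul, smul_zero, zero_mul, mul_zero,
      add_zero, zero_add, neg_zero, Nat.zero_sub, Nat.sub_self] <;>
    module


/-- The set of normally-ordered monomials. -/
def S : Set (HW F) := {x : HW F | ∃ m n : ℕ, B ^ m * A ^ n = x}

lemma mono_mem_span (m n : ℕ) : B ^ m * A ^ n ∈ Submodule.span F (S (F := F)) :=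
  Submodule.subset_span ⟨m, n, rfl⟩

lemma leftB_mem {x : HW F} (hx : x ∈ Submodule.span F (S (F := F))) :
    B * x ∈ Submodule.span F (S (F := F)) := by
  induction hx using Submodule.span_induction with
  | mem x h => obtain ⟨m, n, rfl⟩ := h; rw [N4]; exact mono_mem_span _ _
  | zero => simp
  | add x y _ _ hx hy => rw [mul_add]; exact Submodule.add_mem _ hx hy
  | smul a x _ hx => rw [mul_smul_comm]; exact Submodule.smul_mem _ _ hx

lemma leftA_mem {x : HW F} (hx : x ∈ Submodule.span F (S (F := F))) :
    A * x ∈ Submodule.span F (S (F := F)) := by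
  induction hx using Submodule.span_induction with
  | mem x h =>
      obtain ⟨m, n, rfl⟩ := h; rw [N1]
      exact Submodule.add_mem _ (mono_mem_span _ _)
        (Submodule.smul_mem _ _ (mono_mem_span _ _))
  | zero => simp
  | add x y _ _ hx hy => rw [mul_add]; exact Submodule.add_mem _ hx hy
  | smul a x _ hx => rw [mul_smul_comm]; exact Submodule.smul_mem _ _ hx

lemma powA_mul_mem (n : ℕ) {y : HW F} (hy : y ∈ Submodule.span F (S (F := F))) :
    A ^ n * y ∈ Submodule.span F (S (F := F)) := by
  induction n with
  | zero => simpa using hy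
  | succ k ih => rw [pow_succ', mul_assoc]; exact leftA_mem ih

lemma powB_mul_mem (m : ℕ) {y : HW F} (hy : y ∈ Submodule.span F (S (F := F))) :
    B ^ m * y ∈ Submodule.span F (S (F := F)) := by
  induction m with
  | zero => simpa using hy
  | succ k ih => rw [pow_succ', mul_assoc]; exact leftB_mem ih

lemma mul_mem_span {x y : HW F} (hx : x ∈ Submodule.span F (S (F := F)))
    (hy : y ∈ Submodule.span F (S (F := F))) :
    x * y ∈ Submodule.span F (S (F := F)) := by
  induction hx using Submodule.span_induction with
  | mem x h =>
      obtain ⟨m, n, rfl⟩ := h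
      rw [mul_assoc]
      exact powB_mul_mem m (powA_mul_mem n hy)
  | zero => simp
  | add x y _ _ hx hy => rw [add_mul]; exact Submodule.add_mem _ hx hy
  | smul a x _ hx => rw [smul_mul_assoc]; exact Submodule.smul_mem _ _ hx

lemma span_S_top : Submodule.span F (S (F := F)) = ⊤ := by
  rw [Submodule.eq_top_iff']
  intro x
  obtain ⟨y, rfl⟩ := RingQuot.mkAlgHom_surjective F (HWRel F) x
  induction y using FreeAlgebra.induction with
  | grade0 r =>
      rw [AlgHom.commutes, Algebra.algebraMap_eq_smul_one]
      have h1 : (1 : HW F) ∈ Submodule.span F (S (F := F)) := by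
        simpa using mono_mem_span (F := F) 0 0
      exact Submodule.smul_mem _ _ h1
  | grade1 i =>
      fin_cases i
      · simpa [HW.A] using mono_mem_span (F := F) 0 1
      · simpa [HW.B] using mono_mem_span (F := F) 1 0
  | mul a b ha hb => rw [map_mul]; exact mul_mem_span ha hb
  | add a b ha hb => rw [map_add]; exact Submodule.add_mem _ ha hb


variable (F) in
/-- The generating set. -/
def G : Set (HW F) := {HW.A F, HW.B F * HW.A F ^ 2, HW.B F, HW.A F * HW.B F ^ 2}

variable (F) in
def L : LieSubalgebra F (HW F) := LieSubalgebra.lieSpan F (HW F) (G F)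

lemma hA_mem : A ∈ L F := LieSubalgebra.subset_lieSpan (by simp [G])
lemma hBA2_mem : B * A^2 ∈ L F := LieSubalgebra.subset_lieSpan (by simp [G])
lemma hB_mem : B ∈ L F := LieSubalgebra.subset_lieSpan (by simp [G])
lemma hAB2_mem : A * B^2 ∈ L F := LieSubalgebra.subset_lieSpan (by simp [G])

lemma one_mem_L : (1 : HW F) ∈ L F := by
  have h : ⁅(A : HW F), B⁆ = 1 := by
    rw [Ring.lie_def, hrel]; abel
  exact h ▸ (L F).lie_mem hA_mem hB_mem

variable [CharZero F]

lemma cast_sub_ne (p q : ℕ) (h : p ≠ q) : (p : F) - q ≠ 0 :=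
  sub_ne_zero_of_ne (by exact_mod_cast h)

lemma step1 (m n : ℕ) (hc : 2*m ≠ n) (h1 : B^m * A^n ∈ L F)
    (h2 : B^(m-1) * A^n ∈ L F) : B^m * A^(n+1) ∈ L F := by
  have hc' : (2*(m:F) - n) ≠ 0 := by
    have := cast_sub_ne (F := F) (2*m) n hc; push_cast at this ⊢; exact this
  have key : B^m * A^(n+1)
      = (2*(m:F)-n)⁻¹ • ⁅B * A^2, B^m * A^n⁆
        + (-((2*(m:F)-n)⁻¹ * ((m:F) * ((m:F)-1)))) • (B^(m-1) * A^n) := by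
    rw [F1, smul_add, smul_smul, smul_smul, inv_mul_cancel₀ hc', one_smul]
    module
  rw [key]
  exact (L F).add_mem ((L F).smul_mem _ ((L F).lie_mem hBA2_mem h1))
    ((L F).smul_mem _ h2)

lemma step2 (m n : ℕ) (hc : m ≠ 2*n) (h1 : B^m * A^n ∈ L F)
    (h2 : B^m * A^(n-1) ∈ L F) : B^(m+1) * A^n ∈ L F := by
  have hc' : ((m:F) - 2*n) ≠ 0 := by
    have := cast_sub_ne (F := F) m (2*n) hc; push_cast at this ⊢; exact this
  have key : B^(m+1) * A^n
      = ((m:F)-2*n)⁻¹ • ⁅A * B^2, B^m * A^n⁆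
        + (-(((m:F)-2*n)⁻¹ * (-(n:F) * ((n:F)+1)))) • (B^m * A^(n-1)) := by
    rw [F2, smul_add, smul_smul, smul_smul, inv_mul_cancel₀ hc', one_smul]
    module
  rw [key]
  exact (L F).add_mem ((L F).smul_mem _ ((L F).lie_mem hAB2_mem h1))
    ((L F).smul_mem _ h2)

lemma mono_mem_L : ∀ k m n : ℕ, m + n ≤ k → B^m * A^n ∈ L F := by
  intro k
  induction k with
  | zero =>
      intro m n h
      obtain ⟨rfl, rfl⟩ : m = 0 ∧ n = 0 := by omega
      simpa using one_mem_L
  | succ k ih =>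
      intro m n h
      rcases m with _|m'
      · rcases n with _|n
        · simpa using one_mem_L
        · rcases n with _|n''
          · simpa using hA_mem
          · -- B^0 * A^(n''+2), via step1 at (0, n''+1)
            have := step1 0 (n''+1) (by omega)
              (ih 0 (n''+1) (by omega)) (ih 0 (n''+1) (by omega))
            simpa using this
      · rcases n with _|n''
        · rcases m' with _|m''
          · simpa using hB_mem
          · -- B^(m''+2), via step2 at (m''+1, 0)
            have := step2 (m''+1) 0 (by omega)
              (ih (m''+1) 0 (by omega)) (ih (m''+1) 0 (by omega))
            simpa using this
        · -- B^(m'+1) * A^(n''+1)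
          by_cases hq : n'' = 2*(m'+1)
          · have := step2 m' (n''+1) (by omega)
              (ih m' (n''+1) (by omega)) (ih m' n'' (by simpa using (by omega : m' + n'' ≤ k)))
            simpa using this
          · have := step1 (m'+1) n'' (by omega)
              (ih (m'+1) n'' (by omega)) (ih m' n'' (by omega))
            simpa using this

end HWProof

/-- The Heisenberg–Weyl algebra is generated as a Lie algebra by the four elements
`A`, `B*A^2`, `B` and `A*B^2` (the generators of `g` together with their images
under the automorphism `φ`). -/
theorem hw_lie_generated_by_g_and_phi_g_generators (F : Type) [Field F] [CharZero F] :
    LieSubalgebra.lieSpan F (HW F)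
      {HW.A F, HW.B F * HW.A F ^ 2, HW.B F, HW.A F * HW.B F ^ 2} = ⊤ := by
  rw [eq_top_iff]
  intro x _
  have hx : x ∈ Submodule.span F (HWProof.S (F := F)) := by
    rw [HWProof.span_S_top]; trivial
  have hle : Submodule.span F (HWProof.S (F := F)) ≤ (HWProof.L F).toSubmodule := by
    rw [Submodule.span_le]
    rintro y ⟨m, n, rfl⟩
    exact HWProof.mono_mem_L (m+n) m n le_rfl
  exact hle hx
end
end

section
/- H decomposes as H = g + φ(g) + [g, φ(g)]: the F-subspace of H spanned by g, together with the image φ(g), together with all brackets [x, y] with x ∈ g and y ∈ φ(g), equals all of H. -/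
noncomputable section

section HWaux

variable (F : Type) [Field F]

lemma hw_rel : HW.A F * HW.B F = HW.B F * HW.A F + 1 := by
  have h := RingQuot.mkAlgHom_rel F (HWRel.comm (F := F))
  simpa [map_mul, map_add, map_one, HW.A, HW.B] using h

lemma hw_aBm (m : ℕ) :
    HW.A F * HW.B F ^ m = HW.B F ^ m * HW.A F + m • HW.B F ^ (m - 1) := by
  induction m with
  | zero => simp
  | succ m ih =>
    rw [pow_succ, ← mul_assoc, ih]
    cases m with
    | zero => simp [hw_rel]
    | succ k =>
      simp only [Nat.succ_sub_one]
      rw [add_mul, mul_assoc, hw_rel, mul_add, mul_one, ← mul_assoc, ← pow_succ,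
        smul_mul_assoc, ← pow_succ]
      simp only [succ_nsmul]
      abel

/-- Junk submodule: span of monomials `B^i * A^j` with `i + 2 ≤ m`, `j + 2 ≤ n`. -/
def hwJ (m n : ℕ) : Submodule F (HW F) :=
  Submodule.span F {x | ∃ i j : ℕ, i + 2 ≤ m ∧ j + 2 ≤ n ∧ x = HW.B F ^ i * HW.A F ^ j}

lemma hw_mulA_J {m n : ℕ} {x : HW F} (hx : x ∈ hwJ F m n) :
    HW.A F * x ∈ hwJ F m (n + 1) := by
  induction hx using Submodule.span_induction with
  | mem x hx =>
    obtain ⟨i, j, him, hjn, rfl⟩ := hx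
    rw [← mul_assoc, hw_aBm, add_mul, smul_mul_assoc, mul_assoc, ← pow_succ']
    refine add_mem (Submodule.subset_span ⟨i, j + 1, him, by omega, rfl⟩)
      (Submodule.smul_mem _ _ (Submodule.subset_span ⟨i - 1, j, by omega, by omega, rfl⟩))
  | zero => simpa using (hwJ F m (n+1)).zero_mem
  | add a b _ _ ha hb => rw [mul_add]; exact add_mem ha hb
  | smul c a _ ha => rw [mul_smul_comm]; exact Submodule.smul_mem _ _ ha

lemma hw_D (n m : ℕ) :
    HW.A F ^ n * HW.B F ^ m - HW.B F ^ m * HW.A F ^ n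
      - (n * m) • (HW.B F ^ (m - 1) * HW.A F ^ (n - 1)) ∈ hwJ F m n := by
  induction n with
  | zero => simp
  | succ n ih =>
    cases n with
    | zero =>
      have : HW.A F ^ 1 * HW.B F ^ m - HW.B F ^ m * HW.A F ^ 1
          - (1 * m) • (HW.B F ^ (m - 1) * HW.A F ^ (1 - 1)) = 0 := by
        simp [hw_aBm]
      rw [this]; exact zero_mem _
    | succ k =>
      have key : HW.A F ^ (k + 1 + 1) * HW.B F ^ m - HW.B F ^ m * HW.A F ^ (k + 1 + 1)
            - ((k + 1 + 1) * m) • (HW.B F ^ (m - 1) * HW.A F ^ (k + 1 + 1 - 1))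
          = HW.A F * (HW.A F ^ (k + 1) * HW.B F ^ m - HW.B F ^ m * HW.A F ^ (k + 1)
              - ((k + 1) * m) • (HW.B F ^ (m - 1) * HW.A F ^ (k + 1 - 1)))
            + ((k + 1) * m * (m - 1)) • (HW.B F ^ (m - 1 - 1) * HW.A F ^ k) := by
        simp only [Nat.add_sub_cancel]
        simp only [mul_sub, mul_smul_comm, ← mul_assoc, hw_aBm, add_mul, smul_mul_assoc,
          smul_add, smul_smul]
        simp only [← pow_succ']
        simp only [mul_assoc]
        simp only [← pow_succ']
        simp only [← mul_assoc]
        module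
      rw [key]
      refine add_mem (hw_mulA_J F ih) ?_
      rcases Nat.lt_or_ge m 2 with hm | hm
      · have h0 : m - 1 = 0 := by omega
        rw [h0, mul_zero, zero_smul]
        exact zero_mem _
      · exact Submodule.smul_mem _ _
          (Submodule.subset_span ⟨m - 1 - 1, k, by omega, by omega, rfl⟩)

end HWaux

/-- If `φ` is the algebra homomorphism of the Heisenberg–Weyl algebra with `φ(A) = B` and
`φ(B) = -A`, then `H = g + φ(g) + [g, φ(g)]`. -/
theorem hw_eq_g_sup_phi_g_sup_bracket (F : Type) [Field F] [CharZero F]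
    (φ : HW F →ₐ[F] HW F) (hA : φ (HW.A F) = HW.B F) (hB : φ (HW.B F) = -HW.A F) :
    hwG F ⊔ (hwG F).map φ.toLinearMap ⊔
      Submodule.span F
        {z | ∃ x ∈ hwG F, ∃ y ∈ (hwG F).map φ.toLinearMap, z = ⁅x, y⁆} = ⊤ := by
  set S := hwG F ⊔ (hwG F).map φ.toLinearMap ⊔
      Submodule.span F
        {z | ∃ x ∈ hwG F, ∃ y ∈ (hwG F).map φ.toLinearMap, z = ⁅x, y⁆} with hS
  -- basic memberships
  have hgA : ∀ n : ℕ, 1 ≤ n → HW.A F ^ n ∈ hwG F := fun n hn =>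
    Submodule.subset_span (Or.inr ⟨n, hn, rfl⟩)
  have hmB : ∀ m : ℕ, 1 ≤ m → HW.B F ^ m ∈ (hwG F).map φ.toLinearMap := fun m hm =>
    ⟨HW.A F ^ m, hgA m hm, by simp [map_pow, hA]⟩
  have hAS : ∀ n : ℕ, 1 ≤ n → HW.A F ^ n ∈ S := fun n hn =>
    Submodule.mem_sup_left (Submodule.mem_sup_left (hgA n hn))
  have hBS : ∀ m : ℕ, 1 ≤ m → HW.B F ^ m ∈ S := fun m hm =>
    Submodule.mem_sup_left (Submodule.mem_sup_right (hmB m hm))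
  have hbr : ∀ n m : ℕ, 1 ≤ n → 1 ≤ m →
      HW.A F ^ n * HW.B F ^ m - HW.B F ^ m * HW.A F ^ n ∈ S := fun n m hn hm =>
    Submodule.mem_sup_right (Submodule.subset_span
      ⟨HW.A F ^ n, hgA n hn, HW.B F ^ m, hmB m hm, by rw [Ring.lie_def]⟩)
  have honeS : (1 : HW F) ∈ S := by
    have h1 : HW.A F ^ 1 * HW.B F ^ 1 - HW.B F ^ 1 * HW.A F ^ 1 = 1 := by
      simp [hw_rel F]
    have := hbr 1 1 le_rfl le_rfl
    rwa [h1] at this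
  -- all normal monomials are in S, by induction on min
  have hmono : ∀ d : ℕ, ∀ m n : ℕ, min m n ≤ d → HW.B F ^ m * HW.A F ^ n ∈ S := by
    intro d
    induction d with
    | zero =>
      intro m n hmn
      have h0 : m = 0 ∨ n = 0 := by omega
      rcases h0 with rfl | rfl
      · cases n with
        | zero => simpa using honeS
        | succ k => simpa using hAS (k+1) (Nat.succ_le_succ (Nat.zero_le _))
      · cases m with
        | zero => simpa using honeS
        | succ k => simpa using hBS (k+1) (Nat.succ_le_succ (Nat.zero_le _))
    | succ d ih =>
      intro m n hmn
      rcases Nat.lt_or_ge (min m n) (d+1) with h | h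
      · exact ih m n (Nat.lt_succ_iff.mp h)
      have hmin : min m n = d + 1 := le_antisymm hmn h
      have hm1 : 1 ≤ m := le_trans (by omega) (min_le_left m n)
      have hn1 : 1 ≤ n := le_trans (by omega) (min_le_right m n)
      have hJ : hwJ F (m+1) (n+1) ≤ S := by
        rw [hwJ]
        apply Submodule.span_le.mpr
        rintro x ⟨i, j, hi, hj, rfl⟩
        exact ih i j (by omega)
      have hD := hw_D F (n+1) (m+1)
      have hDS : HW.A F ^ (n+1) * HW.B F ^ (m+1) - HW.B F ^ (m+1) * HW.A F ^ (n+1)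
          - ((n+1) * (m+1)) • (HW.B F ^ (m + 1 - 1) * HW.A F ^ (n + 1 - 1)) ∈ S := hJ hD
      have hsub := hbr (n+1) (m+1) (by omega) (by omega)
      have : ((n+1) * (m+1)) • (HW.B F ^ m * HW.A F ^ n) ∈ S := by
        have := sub_mem hsub hDS
        simpa using this
      have hcast : (((n+1) * (m+1) : ℕ) : F) • (HW.B F ^ m * HW.A F ^ n) ∈ S := by
        rwa [Nat.cast_smul_eq_nsmul]
      have hne : (((n+1) * (m+1) : ℕ) : F) ≠ 0 :=
        Nat.cast_ne_zero.mpr (by positivity)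
      have := Submodule.smul_mem S (((n+1) * (m+1) : ℕ) : F)⁻¹ hcast
      rwa [inv_smul_smul₀ hne] at this
  -- the span of normal monomials is everything
  have hT : ∀ x : HW F, x ∈ S := by
    set T : Submodule F (HW F) :=
      Submodule.span F {x | ∃ m n : ℕ, x = HW.B F ^ m * HW.A F ^ n} with hTdef
    have hTS : T ≤ S := Submodule.span_le.mpr (by rintro x ⟨m, n, rfl⟩; exact hmono _ m n le_rfl)
    have hTA : ∀ t ∈ T, HW.A F * t ∈ T := by
      intro t ht
      induction ht using Submodule.span_induction with
      | mem x hx =>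
        obtain ⟨m, n, rfl⟩ := hx
        rw [← mul_assoc, hw_aBm, add_mul, smul_mul_assoc, mul_assoc, ← pow_succ']
        exact add_mem (Submodule.subset_span ⟨m, n+1, rfl⟩)
          (Submodule.smul_mem _ _ (Submodule.subset_span ⟨m-1, n, rfl⟩))
      | zero => simpa using T.zero_mem
      | add a b _ _ ha hb => rw [mul_add]; exact add_mem ha hb
      | smul c a _ ha => rw [mul_smul_comm]; exact Submodule.smul_mem _ _ ha
    have hTB : ∀ t ∈ T, HW.B F * t ∈ T := by
      intro t ht
      induction ht using Submodule.span_induction with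
      | mem x hx =>
        obtain ⟨m, n, rfl⟩ := hx
        rw [← mul_assoc, ← pow_succ']
        exact Submodule.subset_span ⟨m+1, n, rfl⟩
      | zero => simpa using T.zero_mem
      | add a b _ _ ha hb => rw [mul_add]; exact add_mem ha hb
      | smul c a _ ha => rw [mul_smul_comm]; exact Submodule.smul_mem _ _ ha
    have hmk : ∀ y : FreeAlgebra F (Fin 2), ∀ t ∈ T,
        RingQuot.mkAlgHom F (HWRel F) y * t ∈ T := by
      intro y
      induction y using FreeAlgebra.induction with
      | grade0 r =>
        intro t ht
        rw [AlgHom.commutes, ← Algebra.smul_def]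
        exact Submodule.smul_mem _ _ ht
      | grade1 i =>
        fin_cases i
        · exact hTA
        · exact hTB
      | mul a b ha hb =>
        intro t ht
        rw [map_mul, mul_assoc]
        exact ha _ (hb t ht)
      | add a b ha hb =>
        intro t ht
        rw [map_add, add_mul]
        exact add_mem (ha t ht) (hb t ht)
    intro x
    obtain ⟨y, rfl⟩ := RingQuot.mkAlgHom_surjective F (HWRel F) x
    have h1T : (1 : HW F) ∈ T := Submodule.subset_span ⟨0, 0, by simp⟩
    have := hmk y 1 h1T
    rw [mul_one] at this
    exact hTS this
  rw [eq_top_iff]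
  exact fun x _ => hT x
end
end

section
/- The sum of g and φ(g) inside H is direct: g ∩ φ(g) = {0}. -/
noncomputable section

/- Auxiliary development: the polynomial representation of the Heisenberg–Weyl algebra. -/

variable (F : Type) [Field F]

def hwD : Module.End F (Polynomial F) := Polynomial.derivative
def hwM : Module.End F (Polynomial F) := LinearMap.mulLeft F Polynomial.X

def hwPsi : HW F →ₐ[F] Module.End F (Polynomial F) :=
  RingQuot.liftAlgHom F ⟨FreeAlgebra.lift F ![hwD F, hwM F], by
    rintro x y ⟨⟩
    simp only [map_mul, map_add, map_one, FreeAlgebra.lift_ι_apply,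
      Matrix.cons_val_zero, Matrix.cons_val_one, Matrix.head_cons]
    refine LinearMap.ext fun p => ?_
    simp [hwD, hwM, Module.End.mul_apply, Polynomial.derivative_mul]
    ring⟩

lemma hwPsi_A : hwPsi F (HW.A F) = hwD F := by
  rw [HW.A, hwPsi, RingQuot.liftAlgHom_mkAlgHom_apply]
  simp [FreeAlgebra.lift_ι_apply]

lemma hwPsi_B : hwPsi F (HW.B F) = hwM F := by
  rw [HW.B, hwPsi, RingQuot.liftAlgHom_mkAlgHom_apply]
  simp [FreeAlgebra.lift_ι_apply]

lemma hwM_pow (m : ℕ) : ∀ p : Polynomial F,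
    (hwM F ^ m) p = Polynomial.X ^ m * p := by
  induction m with
  | zero => intro p; simp
  | succ k ih =>
      intro p
      rw [pow_succ, Module.End.mul_apply, ih (hwM F p)]
      simp only [hwM, LinearMap.mulLeft_apply]
      ring

lemma hwD_pow_one (m : ℕ) : (hwD F ^ (m + 1)) 1 = 0 := by
  rw [pow_succ, Module.End.mul_apply]
  have : (hwD F) (1 : Polynomial F) = 0 := by simp [hwD]
  rw [this, map_zero]

lemma hwD_pow_X (m : ℕ) :
    (hwD F ^ (m + 1)) Polynomial.X = if m = 0 then 1 else 0 := by
  rw [pow_succ, Module.End.mul_apply]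
  have : (hwD F) (Polynomial.X : Polynomial F) = 1 := by simp [hwD]
  rw [this]
  cases m with
  | zero => simp
  | succ k => simp [hwD_pow_one]

/-- Index family for the spanning set of `g`. -/
def hwfg : ℕ → HW F := fun n => if n = 0 then HW.B F * HW.A F ^ 2 else HW.A F ^ n

lemma hwfg_zero : hwfg F 0 = HW.B F * HW.A F ^ 2 := if_pos rfl

lemma hwfg_succ (k : ℕ) : hwfg F (k + 1) = HW.A F ^ (k + 1) :=
  if_neg (Nat.succ_ne_zero k)

lemma hwG_eq : hwG F = Submodule.span F (Set.range (hwfg F)) := by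
  unfold hwG
  congr 1
  ext x
  constructor
  · rintro (h | ⟨n, hn, rfl⟩)
    · exact ⟨0, by rw [hwfg_zero]; exact h.symm⟩
    · obtain ⟨k, rfl⟩ := Nat.exists_eq_add_of_le hn
      exact ⟨1 + k, by rw [(by omega : 1 + k = k + 1), hwfg_succ, (by omega : k + 1 = 1 + k)]⟩
  · rintro ⟨n, rfl⟩
    cases n with
    | zero => left; rw [hwfg_zero]; rfl
    | succ k => right; exact ⟨k + 1, Nat.succ_le_succ (Nat.zero_le k), (hwfg_succ F k).symm⟩

lemma hwfg_apply_one (n : ℕ) : (hwPsi F (hwfg F n)) 1 = 0 := by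
  cases n with
  | zero =>
      rw [hwfg_zero, map_mul, map_pow, hwPsi_A, hwPsi_B, Module.End.mul_apply,
        hwD_pow_one F 1]
      simp
  | succ k =>
      rw [hwfg_succ, map_pow, hwPsi_A]
      exact hwD_pow_one F k

lemma hwfg_apply_X (n : ℕ) :
    (hwPsi F (hwfg F n)) Polynomial.X = if n = 1 then 1 else 0 := by
  cases n with
  | zero =>
      rw [hwfg_zero, map_mul, map_pow, hwPsi_A, hwPsi_B, Module.End.mul_apply,
        hwD_pow_X F 1]
      simp
  | succ k =>
      rw [hwfg_succ, map_pow, hwPsi_A, hwD_pow_X F k]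
      cases k with
      | zero => simp
      | succ j => simp

lemma fsum_ite (d : ℕ →₀ F) (k : ℕ) :
    (d.sum fun n a => if n = k then a else 0) = d k := by
  classical
  rw [Finsupp.sum_ite_eq' d k (fun _ a => a)]
  split_ifs with h
  · rfl
  · exact (Finsupp.notMem_support_iff.mp h).symm

lemma fsum_ite_mul (d : ℕ →₀ F) (k : ℕ) (r : F) :
    (d.sum fun n a => if n = k then r * a else 0) = r * d k := by
  classical
  rw [Finsupp.sum_ite_eq' d k (fun _ a => r * a)]
  split_ifs with h
  · rfl
  · rw [Finsupp.notMem_support_iff.mp h, mul_zero]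

/-- If `φ` is the algebra homomorphism of the Heisenberg–Weyl algebra with `φ(A) = B` and
`φ(B) = -A`, then the sum of `g` and `φ(g)` is direct: `g ∩ φ(g) = 0`. -/
theorem hwG_inf_phi_g_eq_bot (F : Type) [Field F] [CharZero F]
    (φ : HW F →ₐ[F] HW F) (hA : φ (HW.A F) = HW.B F) (hB : φ (HW.B F) = -HW.A F) :
    hwG F ⊓ (hwG F).map φ.toLinearMap = ⊥ := by
  classical
  rw [Submodule.eq_bot_iff]
  intro v hv
  rw [Submodule.mem_inf] at hv
  obtain ⟨hv1, hv2⟩ := hv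
  rw [Submodule.mem_map] at hv2
  obtain ⟨w, hw, rfl⟩ := hv2
  rw [hwG_eq, Finsupp.mem_span_range_iff_exists_finsupp] at hw
  obtain ⟨d, hd⟩ := hw
  rw [hwG_eq, Finsupp.mem_span_range_iff_exists_finsupp] at hv1
  obtain ⟨c, hc⟩ := hv1
  -- the image of the spanning family under φ, in the representation
  have hphifg0 : hwPsi F (φ (hwfg F 0)) = -(hwD F * (hwM F * hwM F)) := by
    rw [hwfg_zero, map_mul, map_pow, hA, hB, map_mul, map_neg, hwPsi_A,
      map_pow, hwPsi_B]
    rw [pow_two]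
    refine LinearMap.ext fun p => ?_
    simp [Module.End.mul_apply]
  have hphifgS : ∀ k : ℕ, hwPsi F (φ (hwfg F (k + 1))) = hwM F ^ (k + 1) := by
    intro k
    rw [hwfg_succ, map_pow, map_pow, hA, hwPsi_B]
  -- evaluation linear maps
  set L1 : HW F →ₗ[F] Polynomial F :=
    (LinearMap.applyₗ (1 : Polynomial F)) ∘ₗ (hwPsi F).toLinearMap with hL1
  set LX : HW F →ₗ[F] Polynomial F :=
    (LinearMap.applyₗ (Polynomial.X : Polynomial F)) ∘ₗ (hwPsi F).toLinearMap with hLX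
  -- two expressions for (ψ (φ w)) applied at 1 and at X
  have key1 : (d.sum fun n a => a • (hwPsi F (φ (hwfg F n))) 1) = 0 := by
    have e1 : L1 (φ.toLinearMap w) = d.sum fun n a => a • (hwPsi F (φ (hwfg F n))) 1 := by
      rw [← hd, map_finsuppSum, map_finsuppSum]
      refine Finsupp.sum_congr fun n _ => ?_
      rw [map_smul, map_smul]
      rfl
    have e2 : L1 (φ.toLinearMap w) = c.sum fun n a => a • (hwPsi F (hwfg F n)) 1 := by
      rw [← hc, map_finsuppSum]
      refine Finsupp.sum_congr fun n _ => ?_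
      rw [map_smul]
      rfl
    rw [← e1, e2]
    simp [hwfg_apply_one, Finsupp.sum]
  have keyX : (d.sum fun n a => a • (hwPsi F (φ (hwfg F n))) Polynomial.X) =
      c.sum fun n a => a • (hwPsi F (hwfg F n)) Polynomial.X := by
    have e1 : LX (φ.toLinearMap w) =
        d.sum fun n a => a • (hwPsi F (φ (hwfg F n))) Polynomial.X := by
      rw [← hd, map_finsuppSum, map_finsuppSum]
      refine Finsupp.sum_congr fun n _ => ?_
      rw [map_smul, map_smul]
      rfl
    have e2 : LX (φ.toLinearMap w) =
        c.sum fun n a => a • (hwPsi F (hwfg F n)) Polynomial.X := by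
      rw [← hc, map_finsuppSum]
      refine Finsupp.sum_congr fun n _ => ?_
      rw [map_smul]
      rfl
    rw [← e1, e2]
  -- concrete values
  have val1 : ∀ n : ℕ, (hwPsi F (φ (hwfg F n))) 1 =
      if n = 0 then -(Polynomial.C 2 * Polynomial.X) else Polynomial.X ^ n := by
    intro n
    cases n with
    | zero =>
        rw [if_pos rfl, hphifg0]
        simp only [LinearMap.neg_apply, Module.End.mul_apply]
        simp [hwD, hwM, Polynomial.derivative_mul, map_ofNat]
        ring
    | succ k =>
        rw [if_neg (Nat.succ_ne_zero k), hphifgS, hwM_pow]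
        ring
  have valX : ∀ n : ℕ, (hwPsi F (φ (hwfg F n))) Polynomial.X =
      if n = 0 then -(Polynomial.C 3 * Polynomial.X ^ 2) else Polynomial.X ^ (n + 1) := by
    intro n
    cases n with
    | zero =>
        rw [if_pos rfl, hphifg0]
        simp only [LinearMap.neg_apply, Module.End.mul_apply]
        simp [hwD, hwM, Polynomial.derivative_mul, map_ofNat]
        ring
    | succ k =>
        rw [if_neg (Nat.succ_ne_zero k), hphifgS, hwM_pow]
        ring
  -- extract coefficients
  have coeffEq : ∀ k : ℕ,
      (d.sum fun n a => a * ((hwPsi F (φ (hwfg F n))) 1).coeff k) = 0 := by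
    intro k
    have := congrArg (fun p => (Polynomial.lcoeff F k) p) key1
    simpa [map_finsuppSum, Finsupp.sum, Polynomial.coeff_smul,
      smul_eq_mul] using this
  -- d k = 0 for k ≥ 2
  have hd2 : ∀ k : ℕ, 2 ≤ k → d k = 0 := by
    intro k hk
    have h := coeffEq k
    rw [Finsupp.sum_congr (g2 := fun n a => if n = k then a else 0)] at h
    · rw [fsum_ite] at h; exact h
    · intro n _
      rw [val1 n]
      cases n with
      | zero =>
          rw [if_pos rfl]
          simp only [Polynomial.coeff_neg, Polynomial.coeff_C_mul, Polynomial.coeff_X]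
          rw [if_neg (by omega : ¬ (1 = k)), if_neg (by omega : ¬ ((0:ℕ) = k))]
          ring
      | succ j =>
          rw [if_neg (Nat.succ_ne_zero j), Polynomial.coeff_X_pow]
          by_cases hkj : (j + 1 : ℕ) = k
          · simp [hkj]
          · simp [hkj, Ne.symm hkj]
  -- coefficient 1 : -2 * d 0 + d 1 = 0
  have eq1 : (-2 : F) * d 0 + d 1 = 0 := by
    have h := coeffEq 1
    rw [Finsupp.sum_congr
        (g2 := fun n a => (if n = 0 then (-2 : F) * a else 0) + (if n = 1 then a else 0))] at h
    · rw [Finsupp.sum_add, fsum_ite, fsum_ite_mul] at h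
      exact h
    · intro n _
      rw [val1 n]
      cases n with
      | zero => simp [Polynomial.coeff_C_mul, Polynomial.coeff_X]; ring
      | succ j =>
          rw [if_neg (Nat.succ_ne_zero j), Polynomial.coeff_X_pow]
          cases j with
          | zero => simp
          | succ i => simp [(by omega : ¬ (i + 1 + 1 = 1))]
  -- coefficient 2 of the X-equation : -3 * d 0 + d 1 = 0
  have eq2 : (-3 : F) * d 0 + d 1 = 0 := by
    have h := congrArg (fun p => (Polynomial.lcoeff F 2) p) keyX
    simp only [map_finsuppSum, Finsupp.sum, Polynomial.lcoeff_apply,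
      Polynomial.finset_sum_coeff, Polynomial.coeff_smul, smul_eq_mul] at h
    have hrhs : (∑ n ∈ c.support, c n * ((hwPsi F (hwfg F n)) Polynomial.X).coeff 2) = 0 := by
      apply Finset.sum_eq_zero
      intro n _
      rw [hwfg_apply_X]
      split_ifs <;> simp [Polynomial.coeff_one]
    rw [hrhs] at h
    have hlhs : (∑ n ∈ d.support, d n * ((hwPsi F (φ (hwfg F n))) Polynomial.X).coeff 2) =
        d.sum fun n a => (if n = 0 then (-3 : F) * a else 0) + (if n = 1 then a else 0) := by
      rw [Finsupp.sum]
      apply Finset.sum_congr rfl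
      intro n _
      rw [valX n]
      cases n with
      | zero => simp [Polynomial.coeff_C_mul, Polynomial.coeff_X_pow]; ring
      | succ j =>
          rw [if_neg (Nat.succ_ne_zero j), Polynomial.coeff_X_pow]
          cases j with
          | zero => simp
          | succ i => simp [(by omega : ¬ (i + 1 + 1 + 1 = 2)), (by omega : ¬ (i + 1 + 1 = 1))]
    rw [hlhs, Finsupp.sum_add, fsum_ite, fsum_ite_mul] at h
    exact h
  have hd0 : d 0 = 0 := by linear_combination eq1 - eq2
  have hd1 : d 1 = 0 := by linear_combination eq1 + 2 * hd0
  have hdall : d = 0 := by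
    ext n
    match n with
    | 0 => exact hd0
    | 1 => exact hd1
    | (k + 2) => exact hd2 (k + 2) (by omega)
  have hw0 : w = 0 := by rw [← hd, hdall]; simp
  rw [hw0, map_zero]
end
end

section
/- The family of elements B^m * A^n of H, indexed by pairs (m, n) ∈ ℕ × ℕ, is a basis of H as an F-vector space: it is linearly independent and its F-linear span is all of H. -/
noncomputable section

/-!
The span of the words `B^m A^n` contains `1` and, since `A^(n+1) B = B A^(n+1) + (n+1) A^n`, it
is stable under right multiplication by the generators `A` and `B`; hence it is everything.

For independence, let `H` act on `F[X, Y]` by `A ↦ ∂/∂X + Y` and `B ↦ X`, which respects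
`AB - BA = 1`. As `∂/∂X` kills the powers of `Y`, the word `B^m A^n` sends `1` to the monomial
`X^m Y^n`, and monomials are linearly independent.
-/

theorem pow_succ_mul_eq_of_mul_eq_add_one {R : Type*} [Semiring R] {a b : R}
    (h : a * b = b * a + 1) (n : ℕ) :
    a ^ (n + 1) * b = b * a ^ (n + 1) + (n + 1) • a ^ n := by
  induction n with
  | zero => simpa using h
  | succ n ih =>
    calc a ^ (n + 2) * b = a * (a ^ (n + 1) * b) := by rw [pow_succ' a (n + 1), mul_assoc]
      _ = (a * b) * a ^ (n + 1) + (n + 1) • a ^ (n + 1) := by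
        rw [ih, mul_add, mul_smul_comm, ← pow_succ', mul_assoc]
      _ = b * a ^ (n + 2) + (n + 2) • a ^ (n + 1) := by
        rw [h, add_mul, one_mul, mul_assoc, ← pow_succ', add_assoc, ← succ_nsmul']

theorem Submodule.eq_top_of_adjoin_eq_top_of_mul_mem {R A : Type*} [CommSemiring R] [Semiring A]
    [Algebra R A] {s : Set A} (hs : Algebra.adjoin R s = ⊤) (S : Submodule R A)
    (one_mem : 1 ∈ S) (mul_mem : ∀ x ∈ S, ∀ y ∈ s, x * y ∈ S) : S = ⊤ := by
  have closure_le : (Submonoid.closure s : Set A) ⊆ S := fun x hx => by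
    induction hx using Submonoid.closure_induction_right with
    | one => exact one_mem
    | mul_right x _ y hy hx => exact mul_mem x hx y hy
  rw [eq_top_iff, ← Algebra.top_toSubmodule (R := R), ← hs, Algebra.adjoin_eq_span]
  exact Submodule.span_le.mpr closure_le

namespace HW

variable {F : Type} [Field F]

theorem A_mul_B : A F * B F = B F * A F + 1 := by
  simpa only [A, B, map_mul, map_add, map_one] using RingQuot.mkAlgHom_rel F (HWRel.comm (F := F))

variable (F) in
theorem adjoin_A_B_eq_top : Algebra.adjoin F {A F, B F} = ⊤ := by
  have h := congrArg (Subalgebra.map (RingQuot.mkAlgHom F (HWRel F)))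
    (FreeAlgebra.adjoin_range_ι F (Fin 2))
  rw [AlgHom.map_adjoin, Algebra.map_top,
    (AlgHom.range_eq_top _).mpr (RingQuot.mkAlgHom_surjective _ _), ← Set.range_comp] at h
  rw [← h]
  congr 1
  ext x
  simp [Fin.exists_fin_two, A, B, eq_comm]

section lift

variable {R : Type*} [Semiring R] [Algebra F R] (a b : R) (h : a * b = b * a + 1)

def lift : HW F →ₐ[F] R :=
  RingQuot.liftAlgHom F ⟨FreeAlgebra.lift F ![a, b], by
    rintro _ _ ⟨⟩
    simpa only [map_mul, map_add, map_one, FreeAlgebra.lift_ι_apply, Matrix.cons_val_zero,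
      Matrix.cons_val_one] using h⟩

@[simp]
theorem lift_A : lift a b h (A F) = a := by
  simp [lift, A]

@[simp]
theorem lift_B : lift a b h (B F) = b := by
  simp [lift, B]

end lift

variable (F) in
theorem span_B_pow_mul_A_pow_eq_top :
    Submodule.span F (Set.range fun p : ℕ × ℕ => B F ^ p.1 * A F ^ p.2) = ⊤ := by
  set S := Submodule.span F (Set.range fun p : ℕ × ℕ => B F ^ p.1 * A F ^ p.2)
  have mem (m n : ℕ) : B F ^ m * A F ^ n ∈ S := Submodule.subset_span ⟨(m, n), rfl⟩
  have mul_mem (m n : ℕ) : ∀ y ∈ ({A F, B F} : Set (HW F)), B F ^ m * A F ^ n * y ∈ S := by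
    rintro y (rfl | rfl)
    · simpa only [mul_assoc, ← pow_succ] using mem m (n + 1)
    · rcases n with _ | n
      · simpa only [pow_zero, mul_one, ← pow_succ] using mem (m + 1) 0
      · rw [mul_assoc, pow_succ_mul_eq_of_mul_eq_add_one A_mul_B, mul_add, mul_smul_comm,
          ← mul_assoc, ← pow_succ]
        exact S.add_mem (mem (m + 1) (n + 1)) (S.smul_of_tower_mem _ (mem m n))
  refine Submodule.eq_top_of_adjoin_eq_top_of_mul_mem (adjoin_A_B_eq_top F) S
    (by simpa using mem 0 0) fun x hx y hy => ?_
  induction hx using Submodule.span_induction with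
  | mem x hx => obtain ⟨⟨m, n⟩, rfl⟩ := hx; exact mul_mem m n y hy
  | zero => simp
  | add x x' _ _ hx hx' => rw [add_mul]; exact S.add_mem hx hx'
  | smul c x _ hx => rw [smul_mul_assoc]; exact S.smul_mem c hx

open MvPolynomial

def derivXAddY : Module.End F (MvPolynomial (Fin 2) F) :=
  (pderiv 0).toLinearMap + LinearMap.mulLeft F (X 1)

theorem derivXAddY_mul_mulLeft_X :
    derivXAddY * LinearMap.mulLeft F (X 0) = LinearMap.mulLeft F (X 0) * derivXAddY + 1 := by
  refine LinearMap.ext fun p => ?_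
  simp only [derivXAddY, Module.End.mul_apply, LinearMap.mulLeft_apply, LinearMap.add_apply,
    Derivation.coeFn_coe, Derivation.leibniz, smul_eq_mul, pderiv_X, Pi.single_eq_same, mul_one,
    Module.End.one_apply]
  ring

theorem derivXAddY_pow_one (n : ℕ) : (derivXAddY ^ n) (1 : MvPolynomial (Fin 2) F) = X 1 ^ n := by
  induction n with
  | zero => simp
  | succ n ih =>
    rw [pow_succ', Module.End.mul_apply, ih]
    simp [derivXAddY, pow_succ']

def polyRep : HW F →ₐ[F] Module.End F (MvPolynomial (Fin 2) F) :=
  lift derivXAddY (LinearMap.mulLeft F (X 0)) derivXAddY_mul_mulLeft_X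

theorem polyRep_B_pow_mul_A_pow_one (m n : ℕ) :
    polyRep (B F ^ m * A F ^ n) 1 = monomial (Finsupp.single 0 m + Finsupp.single 1 n) 1 := by
  simp [polyRep, Module.End.mul_apply, derivXAddY_pow_one, X_pow_eq_monomial, monomial_mul]

variable (F) in
theorem linearIndependent_B_pow_mul_A_pow :
    LinearIndependent F (fun p : ℕ × ℕ => B F ^ p.1 * A F ^ p.2) := by
  let ev : HW F →ₗ[F] MvPolynomial (Fin 2) F := LinearMap.applyₗ 1 ∘ₗ polyRep.toLinearMap
  have exponent_injective : Function.Injective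
      fun p : ℕ × ℕ => Finsupp.single (0 : Fin 2) p.1 + Finsupp.single 1 p.2 := by
    rintro ⟨m, n⟩ ⟨m', n'⟩ h
    exact Prod.ext (by simpa using DFunLike.congr_fun h 0) (by simpa using DFunLike.congr_fun h 1)
  have ev_comp : ev ∘ (fun p : ℕ × ℕ => B F ^ p.1 * A F ^ p.2) =
      basisMonomials (Fin 2) F ∘ fun p => Finsupp.single 0 p.1 + Finsupp.single 1 p.2 := by
    funext p
    exact polyRep_B_pow_mul_A_pow_one p.1 p.2
  refine LinearIndependent.of_comp ev ?_
  rw [ev_comp]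
  exact (basisMonomials (Fin 2) F).linearIndependent.comp _ exponent_injective

end HW

theorem hw_basis_general (F : Type) [Field F] :
    LinearIndependent F (fun p : ℕ × ℕ => HW.B F ^ p.1 * HW.A F ^ p.2) ∧
      Submodule.span F
        (Set.range fun p : ℕ × ℕ => HW.B F ^ p.1 * HW.A F ^ p.2) = ⊤ :=
  ⟨HW.linearIndependent_B_pow_mul_A_pow F, HW.span_B_pow_mul_A_pow_eq_top F⟩

/-- The family `B^m * A^n`, for `(m, n) ∈ ℕ × ℕ`, is a vector-space basis of the
Heisenberg–Weyl algebra: it is linearly independent and spans. -/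
theorem hw_basis (F : Type) [Field F] [CharZero F] :
    LinearIndependent F (fun p : ℕ × ℕ => HW.B F ^ p.1 * HW.A F ^ p.2) ∧
      Submodule.span F
        (Set.range fun p : ℕ × ℕ => HW.B F ^ p.1 * HW.A F ^ p.2) = ⊤ :=
  hw_basis_general F
end
end

section
/- For all positive integers h, m, n, the word α^h β^m α^h β^n is regular if and only if m < n. -/
/-- The two-letter alphabet `{α, β}`. -/
inductive HWLetter : Type
  | α : HWLetter
  | β : HWLetter
  deriving DecidableEq

/-- The order on letters: `α > β`, i.e. `β < α`. -/
def HWLetter.lt : HWLetter → HWLetter → Prop :=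
  fun x y => x = HWLetter.β ∧ y = HWLetter.α

/-- `n`-fold concatenation of a word with itself. -/
def wordPow (X : List HWLetter) (n : ℕ) : List HWLetter :=
  (List.replicate n X).flatten

/-- `V > W` iff the concatenation `V ++ W` is strictly greater than `W ++ V`
in the lexicographic order induced by `α > β`; i.e. `W ++ V <lex V ++ W`. -/
def wordGT (V W : List HWLetter) : Prop :=
  List.Lex HWLetter.lt (W ++ V) (V ++ W)

/-- A word is regular (Lyndon–Shirshov) if it is nonempty and for every factorization
`W = L ++ R` into nonempty words, `L > R`. -/
def IsRegularWord (W : List HWLetter) : Prop :=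
  W ≠ [] ∧ ∀ L R : List HWLetter, L ≠ [] → R ≠ [] → W = L ++ R → wordGT L R

/-!
Every proper nonempty suffix `R` of `W = α^h β^m α^h β^n` other than `α^h β^n` begins with fewer
than `h` letters `α` followed by a `β`, so any word starting with `R` is below `W`, which begins
with `α^h`. The only rotation that needs a real comparison is `α^h β^n · α^h β^m` against `W`:
after the common prefix `α^h β^m` the former continues with `β` and the latter with `α` exactly
when `m < n`; for `m = n` the two words coincide and for `n < m` the comparison is reversed.
-/

open List
open HWLetter (α β)

instance : Std.Asymm HWLetter.lt where
  asymm := by rintro _ _ ⟨rfl, rfl⟩ ⟨-, h⟩; cases h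

theorem List.IsSuffix.eq_replicate_append_or_isSuffix {γ : Type*} {x : γ} {R T : List γ} :
    ∀ {k : ℕ}, R <:+ replicate k x ++ T → (∃ i ≤ k, R = replicate i x ++ T) ∨ R <:+ T
  | 0, hR => .inr hR
  | k + 1, hR => by
    rcases suffix_cons_iff.mp hR with rfl | hR
    · exact .inl ⟨k + 1, le_rfl, rfl⟩
    · rcases hR.eq_replicate_append_or_isSuffix with ⟨i, hi, rfl⟩ | hR
      · exact .inl ⟨i, hi.trans k.le_succ, rfl⟩
      · exact .inr hR

def ShortαRun (h : ℕ) (R : List HWLetter) : Prop :=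
  ∃ k < h, ∃ u, R = replicate k α ++ β :: u

theorem shortαRun_replicate_append {h k p : ℕ} (hk : k < h) (hp : 0 < p) (T : List HWLetter) :
    ShortαRun h (replicate k α ++ (replicate p β ++ T)) := by
  obtain ⟨p, rfl⟩ := Nat.exists_eq_add_of_lt hp
  exact ⟨k, hk, replicate p β ++ T, by rw [zero_add, replicate_succ, cons_append]⟩

theorem ShortαRun.append {h : ℕ} {R : List HWLetter} (hR : ShortαRun h R) (L : List HWLetter) :
    ShortαRun h (R ++ L) := by
  obtain ⟨k, hk, u, rfl⟩ := hR
  exact ⟨k, hk, u ++ L, by simp⟩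

theorem ShortαRun.lex {h : ℕ} {R : List HWLetter} (hR : ShortαRun h R) (v : List HWLetter) :
    Lex HWLetter.lt R (replicate h α ++ v) := by
  obtain ⟨k, hk, u, rfl⟩ := hR
  obtain ⟨d, rfl⟩ : ∃ d, h = k + (d + 1) := ⟨h - k - 1, by omega⟩
  rw [replicate_add, append_assoc, replicate_succ, cons_append]
  exact Lex.append_left _ (Lex.rel (show HWLetter.lt β α from ⟨rfl, rfl⟩)) _

theorem lex_rotation_of_lt {h m n : ℕ} (hh : 0 < h) (hmn : m < n) :
    Lex HWLetter.lt (replicate h α ++ replicate n β ++ (replicate h α ++ replicate m β))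
      (replicate h α ++ replicate m β ++ (replicate h α ++ replicate n β)) := by
  obtain ⟨d, rfl⟩ : ∃ d, n = m + (d + 1) := ⟨n - m - 1, by omega⟩
  have hrun := shortαRun_replicate_append (k := 0) hh d.succ_pos (replicate h α ++ replicate m β)
  rw [replicate_add]
  simpa only [append_assoc, replicate_zero, nil_append] using
    Lex.append_left _ (hrun.lex (replicate m β ++ replicate (d + 1) β))
      (replicate h α ++ replicate m β)

theorem eq_or_shortαRun_of_isSuffix {h m n : ℕ} (hh : 0 < h) (hm : 0 < m) (hn : 0 < n)
    {R : List HWLetter}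
    (hR : R <:+ replicate h α ++ (replicate m β ++ (replicate h α ++ replicate n β)))
    (hR₀ : R ≠ [])
    (hRW : R ≠ replicate h α ++ (replicate m β ++ (replicate h α ++ replicate n β))) :
    R = replicate h α ++ replicate n β ∨ ShortαRun h R := by
  rcases hR.eq_replicate_append_or_isSuffix with ⟨i, hi, rfl⟩ | hR
  · obtain hi | rfl := hi.lt_or_eq
    · exact .inr (shortαRun_replicate_append hi hm _)
    · exact absurd rfl hRW
  rcases hR.eq_replicate_append_or_isSuffix with ⟨j, -, rfl⟩ | hR
  · obtain rfl | hj := j.eq_zero_or_pos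
    · exact .inl rfl
    · exact .inr (shortαRun_replicate_append hh hj _)
  rcases hR.eq_replicate_append_or_isSuffix with ⟨i, hi, rfl⟩ | hR
  · obtain hi | rfl := hi.lt_or_eq
    · simpa using Or.inr (shortαRun_replicate_append hi hn [])
    · exact .inl rfl
  rcases (append_nil (replicate n β) ▸ hR).eq_replicate_append_or_isSuffix with ⟨j, -, rfl⟩ | hR
  · obtain rfl | hj := j.eq_zero_or_pos
    · exact absurd rfl hR₀
    · exact .inr (shortαRun_replicate_append hh hj [])
  · exact absurd (suffix_nil.mp hR) hR₀

theorem regular_iff_lt_general (h m n : ℕ) (hh : 1 ≤ h) (hm : 1 ≤ m) :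
    IsRegularWord (wordPow [HWLetter.α] h ++ wordPow [HWLetter.β] m ++
      wordPow [HWLetter.α] h ++ wordPow [HWLetter.β] n) ↔ m < n := by
  simp only [wordPow, flatten_replicate_singleton, append_assoc]
  have hα : replicate h α ≠ [] := by simpa using Nat.one_le_iff_ne_zero.mp hh
  constructor
  · rintro ⟨-, hreg⟩
    have hlex := hreg (replicate h α ++ replicate m β) (replicate h α ++ replicate n β)
      (by simp [hα]) (by simp [hα]) (by simp only [append_assoc])
    by_contra! hnm
    obtain rfl | hnm := hnm.eq_or_lt
    · exact lex_irrefl (fun _ hx => asymm hx hx) _ hlex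
    · exact asymm (r := Lex HWLetter.lt) hlex (lex_rotation_of_lt hh hnm)
  · intro hmn
    refine ⟨by simp [hα], fun L R hL hR hW => ?_⟩
    have hRW : R ≠ L ++ R := fun hRR => hL (append_left_eq_self.mp hRR.symm)
    rcases eq_or_shortαRun_of_isSuffix hh hm (Nat.zero_lt_of_lt hmn) ⟨L, hW.symm⟩ hR (hW ▸ hRW)
      with rfl | hRrun
    · obtain rfl : L = replicate h α ++ replicate m β :=
        append_cancel_right (by simpa only [append_assoc] using hW.symm)
      exact lex_rotation_of_lt hh hmn
    · show Lex _ (R ++ L) (L ++ R)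
      rw [← hW]
      exact (hRrun.append L).lex _

/-- For positive integers `h`, `m`, `n`, the word `α^h β^m α^h β^n` is regular
if and only if `m < n`. -/
theorem regular_iff_lt (h m n : ℕ) (hh : 1 ≤ h) (hm : 1 ≤ m) (hn : 1 ≤ n) :
    IsRegularWord (wordPow [HWLetter.α] h ++ wordPow [HWLetter.β] m ++
      wordPow [HWLetter.α] h ++ wordPow [HWLetter.β] n) ↔ m < n :=
  regular_iff_lt_general h m n hh hm
end

section
/- For all positive integers h, k, m, n, the word α^{h+k} β^m α^h β^n is regular, whereas the word α^h β^m α^{h+k} β^n is not regular. -/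
open HWLetter List

lemma wordPow_singleton (x : HWLetter) (n : ℕ) : wordPow [x] n = List.replicate n x := by
  induction n with
  | zero => rfl
  | succ n ih =>
    unfold wordPow at *
    rw [List.replicate_succ, List.flatten_cons, ih, List.replicate_succ]
    rfl

lemma lex_key (j : ℕ) (s t : List HWLetter) :
    List.Lex HWLetter.lt (List.replicate j α ++ β :: s) (List.replicate j α ++ α :: t) := by
  induction j with
  | zero => exact List.Lex.rel ⟨rfl, rfl⟩
  | succ j ih => simpa [List.replicate_succ] using List.Lex.cons ih

lemma not_lex_key (j : ℕ) (s t : List HWLetter) :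
    ¬ List.Lex HWLetter.lt (List.replicate j α ++ α :: s) (List.replicate j α ++ β :: t) := by
  induction j with
  | zero =>
    intro hcon
    cases hcon with
    | rel h => exact absurd h.1 (by simp)
  | succ j ih =>
    intro hcon
    rw [List.replicate_succ, List.cons_append, List.cons_append] at hcon
    cases hcon with
    | cons h => exact ih h
    | rel h => exact absurd h.1 (by simp)

lemma lex_blockA (j J : ℕ) (hjJ : j < J) (s t : List HWLetter) :
    List.Lex HWLetter.lt (List.replicate j α ++ β :: s) (List.replicate J α ++ t) := by
  obtain ⟨e, rfl⟩ : ∃ e, J = j + (e + 1) := ⟨J - j - 1, by omega⟩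
  rw [List.replicate_add, List.append_assoc, List.replicate_succ, List.cons_append]
  exact lex_key j s _

/-- For positive integers `h`, `k`, `m`, `n`, the word `α^{h+k} β^m α^h β^n`
is regular, whereas `α^h β^m α^{h+k} β^n` is not. -/
theorem regular_and_not_regular (h k m n : ℕ)
    (hh : 1 ≤ h) (hk : 1 ≤ k) (hm : 1 ≤ m) (hn : 1 ≤ n) :
    IsRegularWord (wordPow [HWLetter.α] (h + k) ++ wordPow [HWLetter.β] m ++
        wordPow [HWLetter.α] h ++ wordPow [HWLetter.β] n) ∧
      ¬ IsRegularWord (wordPow [HWLetter.α] h ++ wordPow [HWLetter.β] m ++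
        wordPow [HWLetter.α] (h + k) ++ wordPow [HWLetter.β] n) := by
  obtain ⟨m', rfl⟩ : ∃ m', m = m' + 1 := ⟨m - 1, by omega⟩
  obtain ⟨n', rfl⟩ : ∃ n', n = n' + 1 := ⟨n - 1, by omega⟩
  obtain ⟨k', rfl⟩ : ∃ k', k = k' + 1 := ⟨k - 1, by omega⟩
  simp only [wordPow_singleton, List.append_assoc]
  constructor
  · constructor
    · exact List.ne_nil_of_length_pos (by simp)
    · intro L R hL hR hW
      have hsplit : ∀ P Q : List HWLetter,
          List.replicate (h + (k' + 1)) α ++ (List.replicate (m' + 1) β ++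
            (List.replicate h α ++ List.replicate (n' + 1) β)) = P ++ Q →
          P.length = L.length → L = P ∧ R = Q := by
        intro P Q hPQ hlen
        have h2 : L ++ R = P ++ Q := hW.symm.trans hPQ
        exact List.append_inj h2 hlen.symm
      have hi1 : 1 ≤ L.length := List.length_pos_iff.mpr hL
      have hR1 : 1 ≤ R.length := List.length_pos_iff.mpr hR
      have htot : L.length + R.length = (h + (k' + 1)) + (m' + 1) + h + (n' + 1) := by
        have := congrArg List.length hW
        simp at this
        omega
      rw [wordGT, ← hW]
      rcases Nat.lt_or_ge L.length (h + (k' + 1)) with hc | hc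
      · -- inside first α block
        obtain ⟨c, d, hcd, hi⟩ : ∃ c d, h + (k' + 1) = (c + 1) + (d + 1) ∧ L.length = c + 1 :=
          ⟨L.length - 1, h + (k' + 1) - L.length - 1, by omega, by omega⟩
        obtain ⟨rfl, rfl⟩ := hsplit (List.replicate (c + 1) α)
          (List.replicate (d + 1) α ++ (List.replicate (m' + 1) β ++
            (List.replicate h α ++ List.replicate (n' + 1) β)))
          (by simp [hcd, List.replicate_add, List.append_assoc]) (by simp only [List.length_append, List.length_replicate]; omega)
        rw [show (List.replicate (d + 1) α ++ (List.replicate (m' + 1) β ++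
              (List.replicate h α ++ List.replicate (n' + 1) β))) ++ List.replicate (c + 1) α
            = List.replicate (d + 1) α ++ β :: (List.replicate m' β ++
              (List.replicate h α ++ (List.replicate (n' + 1) β ++ List.replicate (c + 1) α)))
          from by simp [List.replicate_succ]]
        exact lex_blockA _ _ (by omega) _ _
      rcases Nat.lt_or_ge L.length (h + (k' + 1) + (m' + 1)) with hc2 | hc2
      · -- inside first β block
        obtain ⟨e, f, hef, hi⟩ : ∃ e f, m' + 1 = e + (f + 1) ∧
            L.length = (h + (k' + 1)) + e :=
          ⟨L.length - (h + (k' + 1)), (h + (k' + 1) + (m' + 1)) - L.length - 1,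
            by omega, by omega⟩
        obtain ⟨rfl, rfl⟩ := hsplit
          (List.replicate (h + (k' + 1)) α ++ List.replicate e β)
          (List.replicate (f + 1) β ++ (List.replicate h α ++ List.replicate (n' + 1) β))
          (by simp [hef, List.replicate_add, List.append_assoc]) (by simp only [List.length_append, List.length_replicate]; omega)
        rw [show (List.replicate (f + 1) β ++ (List.replicate h α ++
              List.replicate (n' + 1) β)) ++
              (List.replicate (h + (k' + 1)) α ++ List.replicate e β)
            = List.replicate 0 α ++ β :: (List.replicate f β ++ (List.replicate h α ++
              (List.replicate (n' + 1) β ++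
                (List.replicate (h + (k' + 1)) α ++ List.replicate e β))))
          from by simp [List.replicate_succ]]
        exact lex_blockA _ _ (by omega) _ _
      rcases Nat.lt_or_ge L.length (h + (k' + 1) + (m' + 1) + h) with hc3 | hc3
      · -- inside second α block
        obtain ⟨e, f, hef, hi⟩ : ∃ e f, h = e + (f + 1) ∧
            L.length = (h + (k' + 1)) + (m' + 1) + e :=
          ⟨L.length - (h + (k' + 1)) - (m' + 1),
            (h + (k' + 1) + (m' + 1) + h) - L.length - 1, by omega, by omega⟩
        obtain ⟨rfl, rfl⟩ := hsplit
          (List.replicate (h + (k' + 1)) α ++ (List.replicate (m' + 1) β ++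
            List.replicate e α))
          (List.replicate (f + 1) α ++ List.replicate (n' + 1) β)
          (by simp [hef, List.replicate_add, List.append_assoc]) (by simp only [List.length_append, List.length_replicate]; omega)
        rw [show (List.replicate (f + 1) α ++ List.replicate (n' + 1) β) ++
              (List.replicate (h + (k' + 1)) α ++ (List.replicate (m' + 1) β ++
                List.replicate e α))
            = List.replicate (f + 1) α ++ β :: (List.replicate n' β ++
              (List.replicate (h + (k' + 1)) α ++ (List.replicate (m' + 1) β ++
                List.replicate e α)))
          from by simp [List.replicate_succ]]
        exact lex_blockA _ _ (by omega) _ _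
      · -- inside last β block
        obtain ⟨e, f, hef, hi⟩ : ∃ e f, n' + 1 = e + (f + 1) ∧
            L.length = (h + (k' + 1)) + (m' + 1) + h + e :=
          ⟨L.length - (h + (k' + 1)) - (m' + 1) - h,
            (h + (k' + 1) + (m' + 1) + h + (n' + 1)) - L.length - 1, by omega, by omega⟩
        obtain ⟨rfl, rfl⟩ := hsplit
          (List.replicate (h + (k' + 1)) α ++ (List.replicate (m' + 1) β ++
            (List.replicate h α ++ List.replicate e β)))
          (List.replicate (f + 1) β)
          (by simp [hef, List.replicate_add, List.append_assoc]) (by simp only [List.length_append, List.length_replicate]; omega)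
        rw [show List.replicate (f + 1) β ++
              (List.replicate (h + (k' + 1)) α ++ (List.replicate (m' + 1) β ++
                (List.replicate h α ++ List.replicate e β)))
            = List.replicate 0 α ++ β :: (List.replicate f β ++
              (List.replicate (h + (k' + 1)) α ++ (List.replicate (m' + 1) β ++
                (List.replicate h α ++ List.replicate e β))))
          from by simp [List.replicate_succ]]
        exact lex_blockA _ _ (by omega) _ _
  · rintro ⟨-, hall⟩
    have hbad := hall (List.replicate h α ++ List.replicate (m' + 1) β)
      (List.replicate (h + (k' + 1)) α ++ List.replicate (n' + 1) β)
      (List.ne_nil_of_length_pos (by simp))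
      (List.ne_nil_of_length_pos (by simp))
      (by simp)
    rw [wordGT] at hbad
    rw [show (List.replicate (h + (k' + 1)) α ++ List.replicate (n' + 1) β) ++
          (List.replicate h α ++ List.replicate (m' + 1) β)
        = List.replicate h α ++ α :: (List.replicate k' α ++ (List.replicate (n' + 1) β ++
          (List.replicate h α ++ List.replicate (m' + 1) β)))
      from by simp [List.replicate_add, List.replicate_succ],
      show (List.replicate h α ++ List.replicate (m' + 1) β) ++
          (List.replicate (h + (k' + 1)) α ++ List.replicate (n' + 1) β)
        = List.replicate h α ++ β :: (List.replicate m' β ++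
          (List.replicate (h + (k' + 1)) α ++ List.replicate (n' + 1) β))
      from by simp [List.replicate_succ]] at hbad
    exact not_lex_key _ _ _ hbad
end
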